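/- arXiv:2308.09981 — 7 statements merged into one kernel-verified Lean document; each statement's English description precedes it below -/
import Mathlib

section
/- Let G be a finite non-abelian group of nilpotency class at least 3. If H is a maximal (i.e., index-p or more generally proper maximal) normal subgroup of G such that both H and G/H are abelian, then H is unique: H equals the centralizer of the commutator subgroup G' in G, and in particular any two abelian normal subgroups H₁, H₂ of G with G/H₁ and G/H₂ abelian are equal. -/
private lemma key_aux {G : Type*} [Group G]
    (hclass : ¬ commutator G ≤ Subgroup.center G)
    (H : Subgroup G) (hmax : IsCoatom H)
    (habH : ∀ x ∈ H, ∀ y ∈ H, x * y = y * x)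
    (hquotH : commutator G ≤ H) :
    H = Subgroup.centralizer (commutator G : Set G) := by
  have hle : H ≤ Subgroup.centralizer (commutator G : Set G) := by
    intro x hx
    rw [Subgroup.mem_centralizer_iff]
    intro h hh
    exact habH h (hquotH hh) x hx
  by_contra hne
  have htop : Subgroup.centralizer (commutator G : Set G) = ⊤ :=
    hmax.2 _ (lt_of_le_of_ne hle hne)
  apply hclass
  intro z hz
  rw [Subgroup.mem_center_iff]
  intro g
  have hg : g ∈ Subgroup.centralizer (commutator G : Set G) := htop ▸ Subgroup.mem_top g
  exact (Subgroup.mem_centralizer_iff.mp hg z hz).symm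

/-- A finite non-abelian group of nilpotency class ≥ 3 (i.e. `G' ⊄ Z(G)`) has at most one
maximal subgroup `H` that is abelian, normal, and has abelian quotient; such an `H` equals
the centralizer of the commutator subgroup. -/
theorem stmt0 {G : Type*} [Group G] [Finite G]
    (hnab : ¬ ∀ a b : G, a * b = b * a)
    (hclass : ¬ commutator G ≤ Subgroup.center G)
    (H : Subgroup G) [H.Normal] (hmax : IsCoatom H)
    (habH : ∀ x ∈ H, ∀ y ∈ H, x * y = y * x)
    (hquotH : commutator G ≤ H) :
    H = Subgroup.centralizer (commutator G : Set G) ∧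
      ∀ H₁ H₂ : Subgroup G, H₁.Normal → H₂.Normal → IsCoatom H₁ → IsCoatom H₂ →
        (∀ x ∈ H₁, ∀ y ∈ H₁, x * y = y * x) → (∀ x ∈ H₂, ∀ y ∈ H₂, x * y = y * x) →
        commutator G ≤ H₁ → commutator G ≤ H₂ → H₁ = H₂ := by
  refine ⟨key_aux hclass H hmax habH hquotH, ?_⟩
  intro H₁ H₂ _ _ hm₁ hm₂ hab₁ hab₂ hq₁ hq₂
  rw [key_aux hclass H₁ hm₁ hab₁ hq₁, key_aux hclass H₂ hm₂ hab₂ hq₂]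
end

section
/- Let G be a non-abelian group of order p^4 (p prime) of nilpotency class 3. Then G has a unique abelian subgroup of index p. -/
open Subgroup

section Aux

/-- A finite group whose cardinality divides `p ^ 2` is commutative. -/
private lemma comm_of_card_dvd_sq {p : ℕ} (hp : p.Prime) {Q : Type*} [Group Q] [Finite Q]
    (h : Nat.card Q ∣ p ^ 2) : ∀ a b : Q, a * b = b * a := by
  haveI : Fact p.Prime := ⟨hp⟩
  obtain ⟨k, hk, hcard⟩ := (Nat.dvd_prime_pow hp).mp h
  interval_cases k
  · have h1 : Nat.card Q = 1 := by simpa using hcard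
    have : Subsingleton Q := Nat.card_eq_one_iff_unique.mp h1 |>.1
    intro a b; rw [Subsingleton.elim a b]
  · have : IsCyclic Q := isCyclic_of_prime_card (by simpa using hcard)
    letI := IsCyclic.commGroup (α := Q)
    exact mul_comm
  · exact IsPGroup.commutative_of_card_eq_prime_sq hcard

private lemma class_le_one_of_comm {Q : Type*} [Group Q] [Group.IsNilpotent Q]
    (h : ∀ a b : Q, a * b = b * a) : Group.nilpotencyClass Q ≤ 1 := by
  rw [← _root_.upperCentralSeries_eq_top_iff_nilpotencyClass_le, _root_.upperCentralSeries_one]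
  rw [eq_top_iff']
  intro x
  exact Subgroup.mem_center_iff.mpr fun g => h g x

private lemma subgroup_eq_of_le_of_card_le {G : Type*} [Group G] [Finite G]
    {H K : Subgroup G} (h : H ≤ K) (hc : Nat.card K ≤ Nat.card H) : H = K := by
  have hcard : Nat.card (H.subgroupOf K) = Nat.card H :=
    Nat.card_congr (Subgroup.subgroupOfEquivOfLe h).toEquiv
  have hdvd : Nat.card (H.subgroupOf K) ∣ Nat.card K := Subgroup.card_subgroup_dvd_card _
  have hpos : 0 < Nat.card (H.subgroupOf K) := Nat.card_pos
  have hle : Nat.card (H.subgroupOf K) ≤ Nat.card K := Nat.le_of_dvd Nat.card_pos hdvd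
  have heq : Nat.card (H.subgroupOf K) = Nat.card K := le_antisymm hle (hc.trans hcard.ge)
  have := Subgroup.eq_top_of_card_eq _ heq
  exact le_antisymm h (Subgroup.subgroupOf_eq_top.mp this)

/-- Uniqueness part: if the center has order `p` and `|G| = p ^ 4`, any two abelian
subgroups of index `p` coincide. -/
private lemma unique_abelian_aux {p : ℕ} (hp : p.Prime) {G : Type*} [Group G] [Finite G]
    (hcard : Nat.card G = p ^ 4) (hZ : Nat.card (Subgroup.center G) = p)
    {A B : Subgroup G} (hA : A.index = p) (hAc : ∀ x ∈ A, ∀ y ∈ A, x * y = y * x)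
    (hB : B.index = p) (hBc : ∀ x ∈ B, ∀ y ∈ B, x * y = y * x) : A = B := by
  have hppos : 0 < p := hp.pos
  have hdvdA : (A ⊔ B).index ∣ p := hA ▸ Subgroup.index_dvd_of_le le_sup_left
  rcases (Nat.dvd_prime hp).mp hdvdA with hone | hpp
  · -- A ⊔ B = ⊤, so A ⊓ B is central, giving a too-big center
    have htop : A ⊔ B = ⊤ := Subgroup.index_eq_one.mp hone
    have hcent : A ⊓ B ≤ Subgroup.center G := by
      intro z hz
      rw [Subgroup.mem_center_iff]
      intro g
      have hAle : A ≤ Subgroup.centralizer {z} := by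
        intro x hx
        rw [Subgroup.mem_centralizer_iff]
        intro h hh
        rw [Set.mem_singleton_iff] at hh; subst hh
        exact hAc _ hz.1 x hx
      have hBle : B ≤ Subgroup.centralizer {z} := by
        intro x hx
        rw [Subgroup.mem_centralizer_iff]
        intro h hh
        rw [Set.mem_singleton_iff] at hh; subst hh
        exact hBc _ hz.2 x hx
      have : (⊤ : Subgroup G) ≤ Subgroup.centralizer {z} := htop ▸ sup_le hAle hBle
      have hg := this (Subgroup.mem_top g)
      rw [Subgroup.mem_centralizer_iff] at hg
      exact (hg z rfl).symm
    have h1 : Nat.card (A ⊓ B : Subgroup G) ∣ p := hZ ▸ Subgroup.card_dvd_of_le hcent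
    have h2 : (A ⊓ B : Subgroup G).index ≤ p * p := by
      calc (A ⊓ B : Subgroup G).index ≤ A.index * B.index := Subgroup.index_inf_le
        _ = p * p := by rw [hA, hB]
    have h3 : Nat.card (A ⊓ B : Subgroup G) * (A ⊓ B : Subgroup G).index = p ^ 4 :=
      hcard ▸ Subgroup.card_mul_index _
    have h4 : Nat.card (A ⊓ B : Subgroup G) ≤ p := Nat.le_of_dvd hppos h1
    have h5 : p ^ 4 ≤ p * (p * p) := by
      calc p ^ 4 = Nat.card (A ⊓ B : Subgroup G) * (A ⊓ B : Subgroup G).index := h3.symm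
        _ ≤ p * (p * p) := Nat.mul_le_mul h4 h2
    have h6 : p * (p * p) < p ^ 4 := by
      have : p * (p * p) = p ^ 3 := by ring
      rw [this]
      exact Nat.pow_lt_pow_right hp.one_lt (by omega)
    omega
  · -- A ⊔ B has index p, forcing A = A ⊔ B = B
    have hle1 : B ≤ A := by
      have := Subgroup.relIndex_mul_index (le_sup_left : A ≤ A ⊔ B)
      rw [hpp, hA] at this
      have hrel : A.relIndex (A ⊔ B) = 1 := Nat.eq_of_mul_eq_mul_right hppos (by simpa using this)
      exact le_sup_right.trans (Subgroup.relIndex_eq_one.mp hrel)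
    have hdvdB : (A ⊔ B).index ∣ p := hB ▸ Subgroup.index_dvd_of_le le_sup_right
    have hle2 : A ≤ B := by
      have := Subgroup.relIndex_mul_index (le_sup_right : B ≤ A ⊔ B)
      rw [hpp, hB] at this
      have hrel : B.relIndex (A ⊔ B) = 1 := Nat.eq_of_mul_eq_mul_right hppos (by simpa using this)
      exact le_sup_left.trans (Subgroup.relIndex_eq_one.mp hrel)
    exact le_antisymm hle2 hle1

end Aux

/-- A non-abelian group of order `p^4` of nilpotency class `3` has a unique abelian
subgroup of index `p`. -/
theorem stmt1 {p : ℕ} (hp : p.Prime) {G : Type*} [Group G] [Finite G]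
    (hcard : Nat.card G = p ^ 4)
    (hnab : ¬ ∀ a b : G, a * b = b * a)
    [Group.IsNilpotent G] (hclass : Group.nilpotencyClass G = 3) :
    ∃! H : Subgroup G, H.index = p ∧ ∀ x ∈ H, ∀ y ∈ H, x * y = y * x := by
  haveI : Fact p.Prime := ⟨hp⟩
  have hppos : 0 < p := hp.pos
  have hp1 : 1 < p := hp.one_lt
  have hpG : IsPGroup p G := IsPGroup.of_card hcard
  haveI : Nontrivial G := by
    rw [← Finite.one_lt_card_iff_nontrivial, hcard]
    exact Nat.one_lt_pow (by norm_num) hp1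
  have hq : Group.nilpotencyClass (G ⧸ Subgroup.center G) = 2 := by
    rw [nilpotencyClass_quotient_center, hclass]
  -- Step 1: the center has order p.
  have hZcard : Nat.card (Subgroup.center G) = p := by
    obtain ⟨k, hk4, hkcard⟩ := (Nat.dvd_prime_pow hp).mp
      (hcard ▸ Subgroup.card_subgroup_dvd_card (Subgroup.center G))
    haveI := hpG.center_nontrivial
    have hk1 : 1 ≤ k := by
      by_contra hk
      have : k = 0 := by omega
      subst this
      rw [pow_zero] at hkcard
      have := Finite.one_lt_card_iff_nontrivial.mpr (inferInstance : Nontrivial (Subgroup.center G))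
      omega
    have hkle : k ≤ 1 := by
      by_contra hk
      push_neg at hk
      -- index of center = p^(4-k) divides p^2, so the quotient is abelian: class ≤ 1
      obtain ⟨j, hj4, hjcard⟩ := (Nat.dvd_prime_pow hp).mp
        (hcard ▸ Subgroup.index_dvd_card (H := Subgroup.center G))
      have hmul : p ^ k * p ^ j = p ^ 4 := by
        rw [← hkcard, ← hjcard, ← hcard]
        exact Subgroup.card_mul_index _
      rw [← pow_add] at hmul
      have hkj : k + j = 4 := Nat.pow_right_injective hp.two_le hmul
      have hquotcard : Nat.card (G ⧸ Subgroup.center G) ∣ p ^ 2 := by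
        rw [← Subgroup.index_eq_card, hjcard]
        exact pow_dvd_pow p (by omega)
      have hcomm := comm_of_card_dvd_sq hp hquotcard
      have := class_le_one_of_comm hcomm
      omega
    have : k = 1 := le_antisymm hkle hk1
    subst this
    simpa using hkcard
  -- Step 2: pick a with nontrivial central image in G / Z(G).
  haveI : Nontrivial (G ⧸ Subgroup.center G) := by
    rw [← not_subsingleton_iff_nontrivial]
    intro hs
    rw [nilpotencyClass_zero_iff_subsingleton.mpr hs] at hq
    omega
  haveI hnQ : Nontrivial (Subgroup.center (G ⧸ Subgroup.center G)) :=
    (hpG.to_quotient (Subgroup.center G)).center_nontrivial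
  obtain ⟨⟨b, hbmem⟩, hb1⟩ := exists_ne (1 : Subgroup.center (G ⧸ Subgroup.center G))
  have hbne : b ≠ 1 := by
    intro h
    exact hb1 (Subtype.ext h)
  obtain ⟨a, rfl⟩ := QuotientGroup.mk_surjective b
  have hanc : a ∉ Subgroup.center G := fun h => hbne ((QuotientGroup.eq_one_iff a).mpr h)
  have hbcomm : ∀ x : G ⧸ Subgroup.center G,
      x * (a : G ⧸ Subgroup.center G) = (a : G ⧸ Subgroup.center G) * x :=
    Subgroup.mem_center_iff.mp hbmem
  have hcomm_center : ∀ x : G, x * a * x⁻¹ * a⁻¹ ∈ Subgroup.center G := by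
    intro x
    rw [← QuotientGroup.eq_one_iff]
    have : ((x * a * x⁻¹ * a⁻¹ : G) : G ⧸ Subgroup.center G)
        = (x : G ⧸ Subgroup.center G) * a * (x : G ⧸ Subgroup.center G)⁻¹
          * (a : G ⧸ Subgroup.center G)⁻¹ := by
      simp
    rw [this, hbcomm x]
    group
  -- Step 3: the commutator-with-a map is a homomorphism into the center.
  let f : G →* Subgroup.center G :=
    { toFun := fun x => ⟨x * a * x⁻¹ * a⁻¹, hcomm_center x⟩
      map_one' := by
        ext
        show (1 : G) * a * 1⁻¹ * a⁻¹ = 1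
        group
      map_mul' := by
        intro x y
        ext
        show (x * y) * a * (x * y)⁻¹ * a⁻¹
          = (x * a * x⁻¹ * a⁻¹) * (y * a * y⁻¹ * a⁻¹)
        have hcc : ∀ g : G, g * (y * a * y⁻¹ * a⁻¹) = (y * a * y⁻¹ * a⁻¹) * g :=
          Subgroup.mem_center_iff.mp (hcomm_center y)
        calc (x * y) * a * (x * y)⁻¹ * a⁻¹
            = (x * (y * a * y⁻¹ * a⁻¹)) * (a * x⁻¹ * a⁻¹) := by group
          _ = ((y * a * y⁻¹ * a⁻¹) * x) * (a * x⁻¹ * a⁻¹) := by rw [hcc x]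
          _ = (y * a * y⁻¹ * a⁻¹) * (x * a * x⁻¹ * a⁻¹) := by group
          _ = (x * a * x⁻¹ * a⁻¹) * (y * a * y⁻¹ * a⁻¹) := (hcc _).symm }
    -- the kernel of f
  have hfval : ∀ x : G, (f x : G) = x * a * x⁻¹ * a⁻¹ := fun _ => rfl
  have hker_comm : ∀ x : G, x ∈ f.ker → x * a = a * x := by
    intro x hx
    have h1 : x * a * x⁻¹ * a⁻¹ = 1 := by
      have := congrArg (Subtype.val) (MonoidHom.mem_ker.mp hx)
      simpa [hfval] using this
    calc x * a = (x * a * x⁻¹ * a⁻¹) * (a * x) := by group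
      _ = 1 * (a * x) := by rw [h1]
      _ = a * x := one_mul _
  have hcomm_ker : ∀ x : G, x * a = a * x → x ∈ f.ker := by
    intro x hx
    rw [MonoidHom.mem_ker]
    ext
    show x * a * x⁻¹ * a⁻¹ = 1
    rw [hx]
    group
  have hKindex : f.ker.index = p := by
    have h1 : f.ker.index = Nat.card f.range := Subgroup.index_ker f
    have h2 : Nat.card f.range ∣ p := hZcard ▸ Subgroup.card_subgroup_dvd_card f.range
    rcases (Nat.dvd_prime hp).mp (h1 ▸ h2 : f.ker.index ∣ p) with hone | hpp
    · exfalso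
      have htop : f.ker = ⊤ := Subgroup.index_eq_one.mp hone
      apply hanc
      rw [Subgroup.mem_center_iff]
      intro g
      exact hker_comm g (htop ▸ Subgroup.mem_top g)
    · exact hpp
  have hKcard : Nat.card f.ker = p ^ 3 := by
    have h1 : Nat.card f.ker * p = p ^ 4 := by
      conv_lhs => rw [← hKindex]
      rw [Subgroup.card_mul_index, hcard]
    exact Nat.eq_of_mul_eq_mul_right hppos (by rw [h1]; ring)
  -- Step 4: the kernel is abelian.
  have haK : a ∈ f.ker := hcomm_ker a rfl
  have hZK : Subgroup.center G ≤ f.ker := by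
    intro z hz
    exact hcomm_ker z (Subgroup.mem_center_iff.mp hz a).symm
  set M : Subgroup G := Subgroup.center G ⊔ Subgroup.zpowers a with hM
  have hMK : M ≤ f.ker := sup_le hZK (Subgroup.zpowers_le.mpr haK)
  have hMcomm : ∀ x ∈ f.ker, ∀ m ∈ M, x * m = m * x := by
    intro x hx m hm
    have hle : M ≤ Subgroup.centralizer {x} := by
      apply sup_le
      · intro z hz
        rw [Subgroup.mem_centralizer_iff]
        intro h hh
        rw [Set.mem_singleton_iff] at hh; subst hh
        exact Subgroup.mem_center_iff.mp hz _
      · rw [Subgroup.zpowers_le, Subgroup.mem_centralizer_iff]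
        intro h hh
        rw [Set.mem_singleton_iff] at hh; subst hh
        exact hker_comm _ hx
    have := hle hm
    rw [Subgroup.mem_centralizer_iff] at this
    exact this x rfl
  -- M has order at least p^2 and embeds into the center of the kernel.
  have hMcard : p ^ 2 ∣ Nat.card M := by
    obtain ⟨k, hk, hkcard⟩ := (Nat.dvd_prime_pow hp).mp
      (hcard ▸ Subgroup.card_subgroup_dvd_card M)
    have hpdvd : p ∣ Nat.card M := hZcard ▸ Subgroup.card_dvd_of_le le_sup_left
    have hk1 : 1 ≤ k := by
      by_contra h
      have : k = 0 := by omega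
      subst this
      rw [pow_zero] at hkcard
      rw [hkcard] at hpdvd
      have := Nat.le_of_dvd one_pos hpdvd
      omega
    have hk2 : 2 ≤ k := by
      by_contra h
      have : k = 1 := by omega
      subst this
      rw [pow_one] at hkcard
      have : Subgroup.center G = M :=
        subgroup_eq_of_le_of_card_le le_sup_left (by rw [hkcard, hZcard])
      exact hanc (this ▸ (le_sup_right (a := Subgroup.center G)
        (Subgroup.mem_zpowers a) : a ∈ M))
    rw [hkcard]
    exact pow_dvd_pow p hk2
  have hMsub : M.subgroupOf f.ker ≤ Subgroup.center f.ker := by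
    intro ⟨m, hmK⟩ hm
    rw [Subgroup.mem_subgroupOf] at hm
    rw [Subgroup.mem_center_iff]
    intro ⟨g, hgK⟩
    ext
    exact hMcomm g hgK m hm
  have hMcard' : Nat.card (M.subgroupOf f.ker) = Nat.card M :=
    Nat.card_congr (Subgroup.subgroupOfEquivOfLe hMK).toEquiv
  have hZKdvd : p ^ 2 ∣ Nat.card (Subgroup.center f.ker) := by
    calc p ^ 2 ∣ Nat.card (M.subgroupOf f.ker) := hMcard' ▸ hMcard
      _ ∣ Nat.card (Subgroup.center f.ker) := Subgroup.card_dvd_of_le hMsub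
  have hidx : (Subgroup.center f.ker).index ∣ p := by
    obtain ⟨m, hm⟩ := hZKdvd
    have hmul : Nat.card (Subgroup.center f.ker) * (Subgroup.center f.ker).index
        = p ^ 3 := hKcard ▸ Subgroup.card_mul_index _
    rw [hm] at hmul
    have : m * (Subgroup.center f.ker).index * p ^ 2 = p * p ^ 2 := by
      calc m * (Subgroup.center f.ker).index * p ^ 2
          = p ^ 2 * m * (Subgroup.center f.ker).index := by ring
        _ = p ^ 3 := hmul
        _ = p * p ^ 2 := by ring
    have h3 : m * (Subgroup.center f.ker).index = p :=
      Nat.eq_of_mul_eq_mul_right (by positivity) this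
    exact Dvd.intro_left m h3
  have hcyc : IsCyclic (f.ker ⧸ Subgroup.center f.ker) := by
    rcases (Nat.dvd_prime hp).mp hidx with hone | hpp
    · have hcard1 : Nat.card (f.ker ⧸ Subgroup.center f.ker) = 1 := by
        rw [← Subgroup.index_eq_card]
        exact hone
      have : Subsingleton (f.ker ⧸ Subgroup.center f.ker) :=
        (Nat.card_eq_one_iff_unique.mp hcard1).1
      infer_instance
    · exact isCyclic_of_prime_card (by rw [← Subgroup.index_eq_card, hpp])
  have hKcomm : ∀ x ∈ f.ker, ∀ y ∈ f.ker, x * y = y * x := by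
    have hall : ∀ u v : f.ker, u * v = v * u := by
      apply commutative_of_cyclic_center_quotient (QuotientGroup.mk' (Subgroup.center f.ker))
      rw [QuotientGroup.ker_mk']
    intro x hx y hy
    have := hall ⟨x, hx⟩ ⟨y, hy⟩
    exact Subtype.ext_iff.mp this
  -- Conclusion.
  refine ⟨f.ker, ⟨hKindex, hKcomm⟩, ?_⟩
  rintro H ⟨hHi, hHc⟩
  exact unique_abelian_aux hp hcard hZcard hHi hHc hKindex hKcomm
end

section
/- Let G be a VZ-group, i.e., a finite group all of whose non-linear irreducible complex characters vanish on G \ Z(G). Then G' ⊆ Z(G) (so G has nilpotency class at most 2), and every non-linear irreducible character χ of G satisfies χ(1)² = |G : Z(G)|; in particular the set of irreducible character degrees is {1, |G/Z(G)|^{1/2}} when G is non-abelian. -/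
/-- `χ` is an irreducible complex character of `G`. -/
def IsIrrChar (G : Type) [Group G] (χ : G → ℂ) : Prop :=
  ∃ V : FDRep ℂ G, CategoryTheory.Simple V ∧ FDRep.character V = χ

/-- `G` is a VZ-group: every non-linear irreducible complex character vanishes off the
center. -/
def IsVZ (G : Type) [Group G] : Prop :=
  ∀ χ : G → ℂ, IsIrrChar G χ → χ 1 ≠ 1 → ∀ g : G, g ∉ Subgroup.center G → χ g = 0

open CategoryTheory
set_option linter.unusedSectionVars false
set_option linter.unnecessarySimpa false
set_option maxHeartbeats 1000000

noncomputable section VZauxSection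
namespace VZaux
variable {G : Type} [Group G] [Fintype G]

abbrev A (G : Type) [Group G] := MonoidAlgebra ℂ G

instance : Module.Finite ℂ (A G) :=
  Module.Finite.equiv (MonoidAlgebra.coeffLinearEquiv ℂ).symm

/-- left regular representation of `G` on the monoid algebra -/
def lreg : Representation ℂ G (A G) :=
  ((Algebra.lmul ℂ (A G)).toMonoidHom.comp (MonoidAlgebra.of ℂ G) : G →* Module.End ℂ (A G))

lemma lreg_apply (g : G) (x : A G) : lreg g x = (MonoidAlgebra.single g 1 : A G) * x := rfl

lemma lreg_mapsTo (S : Submodule (A G) (A G)) (g : G) :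
    Set.MapsTo (lreg g) (S.restrictScalars ℂ) (S.restrictScalars ℂ) := by
  intro x hx
  have h1 : lreg g x = (MonoidAlgebra.single g 1 : A G) • x := by
    rw [lreg_apply, smul_eq_mul]
  have hx' : x ∈ S := hx
  show lreg g x ∈ S.restrictScalars ℂ
  rw [h1]
  exact S.smul_mem _ hx'

/-- the representation of `G` on an `A G`-submodule of the monoid algebra -/
def resRep (S : Submodule (A G) (A G)) : Representation ℂ G ↥(S.restrictScalars ℂ) where
  toFun g := (lreg g).restrict (lreg_mapsTo S g)
  map_one' := by
    refine LinearMap.ext fun x => Subtype.ext ?_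
    show (MonoidAlgebra.single (1 : G) (1 : ℂ) : A G) * ↑x = ↑x
    rw [← MonoidAlgebra.one_def, one_mul]
  map_mul' g h := by
    refine LinearMap.ext fun x => Subtype.ext ?_
    show (MonoidAlgebra.single (g * h) 1 : A G) * ↑x
        = (MonoidAlgebra.single g 1 : A G) * ((MonoidAlgebra.single h 1 : A G) * ↑x)
    rw [← mul_assoc, MonoidAlgebra.single_mul_single, one_mul]

lemma resRep_coe (S : Submodule (A G) (A G)) (g : G) (x : ↥(S.restrictScalars ℂ)) :
    (resRep S g x : A G) = (MonoidAlgebra.single g 1 : A G) * ↑x := rfl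

/-- the FDRep attached to a submodule of the regular representation -/
def X (S : Submodule (A G) (A G)) : FDRep ℂ G := FDRep.of (resRep S)

/-- a `G`-invariant `ℂ`-submodule of the monoid algebra is an `A G`-submodule -/
def toA (p : Submodule ℂ (A G))
    (hp : ∀ g : G, ∀ x ∈ p, (MonoidAlgebra.single g 1 : A G) * x ∈ p) :
    Submodule (A G) (A G) where
  carrier := p
  add_mem' := p.add_mem
  zero_mem' := p.zero_mem
  smul_mem' := by
    intro a x hx
    rw [smul_eq_mul]
    induction a using MonoidAlgebra.induction_linear with
    | zero => simpa using p.zero_mem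
    | add f g hf hg => rw [add_mul]; exact p.add_mem hf hg
    | single g c =>
      have : (MonoidAlgebra.single g c : A G) * x
          = c • ((MonoidAlgebra.single g 1 : A G) * x) := by
        rw [← smul_mul_assoc]
        congr 1
        rw [MonoidAlgebra.smul_single, smul_eq_mul, mul_one]
      rw [this]
      exact p.smul_mem _ (hp g x hx)


theorem simpleX (S : Submodule (A G) (A G)) (hS : IsAtom S) : Simple (X S) := by
  constructor
  intro Y f hmono
  -- the underlying linear map
  set u : (Y : Type) →ₗ[ℂ] ↥(S.restrictScalars ℂ) := f.hom.hom.hom with hu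
  have hcomm : ∀ (g : G) (y : Y), u (Y.ρ g y) = resRep S g (u y) := by
    intro g y
    exact congrArg (fun φ => φ.hom.hom y) (f.comm g)
  -- the image submodule
  set p : Submodule ℂ (A G) := (LinearMap.range u).map (S.restrictScalars ℂ).subtype with hpdef
  have hp : ∀ g : G, ∀ x ∈ p, (MonoidAlgebra.single g 1 : A G) * x ∈ p := by
    rintro g x hx
    obtain ⟨w, ⟨y, rfl⟩, rfl⟩ := hx
    refine ⟨resRep S g (u y), ⟨Y.ρ g y, hcomm g y⟩, ?_⟩
    exact (resRep_coe S g (u y)).symm ▸ rfl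
  have hqle : toA p hp ≤ S := by
    rintro x hx
    obtain ⟨w, _, rfl⟩ := hx
    exact w.2
  -- nontriviality of the target
  obtain ⟨x0, hx0S, hx0⟩ : ∃ x : A G, x ∈ S ∧ x ≠ 0 := by
    by_contra h
    push_neg at h
    refine hS.1 ?_
    ext x
    simp only [Submodule.mem_bot]
    exact ⟨h x, by rintro rfl; exact S.zero_mem⟩
  have hXne : (𝟙 (X S) : X S ⟶ X S) ≠ 0 := by
    intro h
    have : (⟨x0, hx0S⟩ : ↥(S.restrictScalars ℂ)) = 0 :=
      congrArg (fun φ => φ.hom.hom.hom ⟨x0, hx0S⟩) h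
    exact hx0 (congrArg Subtype.val this)
  rcases (lt_or_eq_of_le hqle) with hlt | heq
  · -- q = ⊥, so f = 0 and f is not iso
    have hqbot := hS.2 _ hlt
    have hf0 : f = 0 := by
      ext y
      have : (u y : A G) ∈ toA p hp := ⟨u y, ⟨y, rfl⟩, rfl⟩
      rw [hqbot] at this
      have : (u y : A G) = 0 := this
      exact Subtype.ext this
    constructor
    · intro hiso h
      haveI := hiso
      have h2 : 𝟙 (X S) = inv f ≫ f := (IsIso.inv_hom_id f).symm
      have h3 : inv f ≫ f = inv f ≫ (0 : Y ⟶ X S) := congrArg (fun t => inv f ≫ t) hf0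
      rw [h3, Limits.comp_zero] at h2
      exact hXne h2
    · intro hne
      exact absurd hf0 hne
  · -- q = S: u is surjective; kernel trick gives injectivity
    have hsurj : Function.Surjective u := by
      intro x
      have : (x : A G) ∈ toA p hp := by rw [heq]; exact x.2
      obtain ⟨w, ⟨y, rfl⟩, hw⟩ := this
      exact ⟨y, Subtype.ext hw⟩
    -- kernel subrep
    have hkerinv : ∀ g : G, ∀ y ∈ LinearMap.ker u, Y.ρ g y ∈ LinearMap.ker u := by
      intro g y hy
      simp only [LinearMap.mem_ker] at hy ⊢
      rw [hcomm g y, hy, map_zero]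
    let K : FDRep ℂ G := FDRep.of (G := G)
      { toFun := fun g => (Y.ρ g).restrict (fun y hy => hkerinv g y hy)
        map_one' := by
          refine LinearMap.ext fun y => Subtype.ext ?_
          show Y.ρ 1 ↑y = ↑y
          rw [map_one]; rfl
        map_mul' := fun g h => by
          refine LinearMap.ext fun y => Subtype.ext ?_
          show Y.ρ (g * h) ↑y = Y.ρ g (Y.ρ h ↑y)
          rw [map_mul]; rfl }
    let ι : K ⟶ Y :=
      { hom := FGModuleCat.ofHom (LinearMap.ker u).subtype
        comm := fun g => rfl }
    have hι : ι ≫ f = (0 : K ⟶ Y) ≫ f := by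
      rw [Limits.zero_comp]
      ext y
      exact y.2
    have hι0 : ι = 0 := hmono.right_cancellation _ _ hι
    have hinj : Function.Injective u := by
      rw [← LinearMap.ker_eq_bot]
      ext y
      simp only [Submodule.mem_bot]
      constructor
      · intro hy
        have := congrArg (fun φ => φ.hom.hom.hom ⟨y, hy⟩) hι0
        exact this
      · intro hy; simp [hy]
    -- build the inverse
    let e : (Y : Type) ≃ₗ[ℂ] ↥(S.restrictScalars ℂ) := LinearEquiv.ofBijective u ⟨hinj, hsurj⟩
    let ginv : X S ⟶ Y :=
      { hom := FGModuleCat.ofHom (e.symm : ↥(S.restrictScalars ℂ) →ₗ[ℂ] (Y : Type))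
        comm := fun g => by
          ext x
          show e.symm (resRep S g x) = Y.ρ g (e.symm x)
          apply hinj
          show u _ = u _
          have h1 : u (e.symm (resRep S g x)) = resRep S g x := e.apply_symm_apply _
          rw [h1, hcomm g (e.symm x)]
          congr 1
          exact (e.apply_symm_apply x).symm }
    constructor
    · intro _ hf0
      obtain ⟨y, hy⟩ := hsurj ⟨x0, hx0S⟩
      have hu0 : u y = 0 := by
        rw [hu, hf0]
        rfl
      rw [hu0] at hy
      exact hx0 (congrArg Subtype.val hy.symm)
    · intro _
      refine ⟨⟨ginv, ?_, ?_⟩⟩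
      · ext y
        exact e.symm_apply_apply y
      · ext x
        exact e.apply_symm_apply x

-- trace of lreg
lemma trace_lreg (c : G) (hc : c ≠ 1) : LinearMap.trace ℂ (A G) (lreg c) = 0 := by
  classical
  rw [LinearMap.trace_eq_matrix_trace ℂ (MonoidAlgebra.basis G ℂ)]
  rw [Matrix.trace]
  refine Finset.sum_eq_zero fun g _ => ?_
  rw [Matrix.diag_apply, LinearMap.toMatrix_apply]
  have h2 : (lreg c (MonoidAlgebra.single g 1 : A G) : A G) = MonoidAlgebra.single (c * g) (1 : ℂ) := by
    rw [lreg_apply]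
    exact (MonoidAlgebra.single_mul_single _ _ _ _).trans (by rw [one_mul])
  show (lreg c (MonoidAlgebra.single g 1 : A G)).coeff g = 0
  rw [h2, MonoidAlgebra.coeff_single, Finsupp.single_apply, if_neg (by simpa [mul_eq_right] using hc)]

-- trace is multiplicative on one-dimensional spaces
lemma trace_mul_of_finrank_one {V : Type} [AddCommGroup V] [Module ℂ V]
    (h1 : Module.finrank ℂ V = 1) (f g : V →ₗ[ℂ] V) :
    LinearMap.trace ℂ V (f ∘ₗ g) = LinearMap.trace ℂ V f * LinearMap.trace ℂ V g := by
  classical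
  haveI : Module.Finite ℂ V := Module.finite_of_finrank_eq_succ h1
  let b := Module.finBasisOfFinrankEq ℂ V h1
  rw [LinearMap.trace_eq_matrix_trace ℂ b, LinearMap.trace_eq_matrix_trace ℂ b,
    LinearMap.trace_eq_matrix_trace ℂ b, LinearMap.toMatrix_comp b b b]
  simp [Matrix.trace, Matrix.mul_apply, Fin.sum_univ_succ]

lemma central_smul (V : FDRep ℂ G) [Simple V] (z : G) (hz : z ∈ Subgroup.center G) :
    ∃ a : ℂ, V.ρ z = a • LinearMap.id := by
  let f : V ⟶ V := ⟨FGModuleCat.ofHom (V.ρ z), by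
    intro h; ext v
    show V.ρ z (V.ρ h v) = V.ρ h (V.ρ z v)
    rw [← Module.End.mul_apply, ← Module.End.mul_apply, ← map_mul, ← map_mul,
      (Subgroup.mem_center_iff.mp hz h)]⟩
  obtain ⟨a, ha⟩ := endomorphism_simple_eq_smul_id ℂ f
  refine ⟨a, ?_⟩
  have := congrArg (fun φ => φ.hom.hom.hom) ha
  exact this.symm.trans rfl

lemma char_central (V : FDRep ℂ G) [Simple V] (z : G) (hz : z ∈ Subgroup.center G) :
    V.character z * V.character z⁻¹ = (Module.finrank ℂ V : ℂ) ^ 2 := by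
  obtain ⟨a, ha⟩ := central_smul V z hz
  obtain ⟨b, hb⟩ := central_smul V z⁻¹ (inv_mem hz)
  have hne : (LinearMap.id : V →ₗ[ℂ] V) ≠ 0 := by
    intro h
    apply id_nonzero V
    ext v
    exact congrFun (congrArg DFunLike.coe h) v
  have hab : a * b = 1 := by
    have h1 : V.ρ z * V.ρ z⁻¹ = 1 := by rw [← map_mul, mul_inv_cancel, map_one]
    rw [ha, hb] at h1
    obtain ⟨v, hv⟩ : ∃ v : V, v ≠ 0 := by
      by_contra h
      push_neg at h
      exact hne (by ext w; simp [h w])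
    have := congrFun (congrArg DFunLike.coe h1) v
    simp only [Module.End.mul_apply, LinearMap.smul_apply, LinearMap.id_apply, Module.End.one_apply,
      smul_smul] at this
    have h2 : ((a * b) - 1) • v = 0 := by rw [sub_smul, one_smul, this, sub_self]
    rcases smul_eq_zero.mp h2 with h | h
    · exact sub_eq_zero.mp h
    · exact absurd h hv
  have hχz : V.character z = a * (Module.finrank ℂ V : ℂ) := by
    rw [FDRep.character, ha, map_smul, LinearMap.trace_id, smul_eq_mul]
  have hχz' : V.character z⁻¹ = b * (Module.finrank ℂ V : ℂ) := by
    rw [FDRep.character, hb, map_smul, LinearMap.trace_id, smul_eq_mul]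
  rw [hχz, hχz']
  have : a * (Module.finrank ℂ V : ℂ) * (b * (Module.finrank ℂ V : ℂ))
      = (a * b) * (Module.finrank ℂ V : ℂ) ^ 2 := by ring
  rw [this, hab, one_mul]


lemma part2 (hVZ : IsVZ G) (χ : G → ℂ) (hχ : IsIrrChar G χ) (hnl : χ 1 ≠ 1) :
    (χ 1) ^ 2 = ((Subgroup.center G).index : ℂ) := by
  classical
  obtain ⟨V, hs, rfl⟩ := hχ
  haveI := hs
  haveI : Invertible ((Nat.card G : ℂ)) :=
    invertibleOfNonzero (by rw [Nat.card_eq_fintype_card]; exact_mod_cast Fintype.card_ne_zero)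
  letI : Fintype (GrpCat.of G) := ‹Fintype G›
  have horth0 := FDRep.char_orthonormal (k := ℂ) (G := GrpCat.of G) V V
  rw [if_pos ⟨Iso.refl V⟩] at horth0
  rw [Nat.card_eq_fintype_card] at horth0
  have horth : (Fintype.card G : ℂ)⁻¹ • ∑ g : G, V.character g * V.character g⁻¹ = 1 := horth0
  set n : ℂ := (Module.finrank ℂ V : ℂ) with hn
  have hvan : ∀ g : G, g ∉ Subgroup.center G → V.character g = 0 :=
    hVZ _ ⟨V, hs, rfl⟩ hnl
  have hsum : ∑ g : G, V.character g * V.character g⁻¹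
      = (Fintype.card (Subgroup.center G) : ℂ) * n ^ 2 := by
    rw [← Finset.sum_filter_add_sum_filter_not Finset.univ (fun g => g ∈ Subgroup.center G)]
    have h2 : ∑ g ∈ Finset.univ.filter (fun g => ¬ g ∈ Subgroup.center G),
        V.character g * V.character g⁻¹ = 0 := by
      apply Finset.sum_eq_zero
      intro g hg
      rw [hvan g (Finset.mem_filter.mp hg).2, zero_mul]
    rw [h2, add_zero]
    have h1 : ∀ g ∈ Finset.univ.filter (fun g => g ∈ Subgroup.center G),
        V.character g * V.character g⁻¹ = n ^ 2 := fun g hg =>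
      char_central V g (Finset.mem_filter.mp hg).2
    rw [Finset.sum_congr rfl h1, Finset.sum_const, nsmul_eq_mul]
    congr 1
    norm_cast
    simpa using (Fintype.card_subtype (fun g => g ∈ Subgroup.center G)).symm
  have hGcard : (Fintype.card G : ℂ) = (Fintype.card (Subgroup.center G) : ℂ) *
      ((Subgroup.center G).index : ℂ) := by
    norm_cast
    rw [← Nat.card_eq_fintype_card, ← Nat.card_eq_fintype_card]
    exact (Subgroup.card_mul_index _).symm
  have hS : (Fintype.card (Subgroup.center G) : ℂ) * n ^ 2 = (Fintype.card G : ℂ) := by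
    have h := congrArg (fun x => (Fintype.card G : ℂ) * x) horth
    have hGne : (Fintype.card G : ℂ) ≠ 0 := by exact_mod_cast Fintype.card_ne_zero
    simp only [smul_eq_mul, ← mul_assoc, mul_inv_cancel₀ hGne, one_mul, mul_one] at h
    rw [hsum] at h
    exact h
  have hZne : (Fintype.card (Subgroup.center G) : ℂ) ≠ 0 := by
    exact_mod_cast Fintype.card_ne_zero
  have := hS.trans hGcard
  have := mul_left_cancel₀ hZne this
  rw [FDRep.char_one, ← this]

lemma char_X (S : Submodule (A G) (A G)) (g : G) (h : Set.MapsTo (lreg g)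
    (S.restrictScalars ℂ) (S.restrictScalars ℂ)) :
    (X S).character g = LinearMap.trace ℂ ↥(S.restrictScalars ℂ) ((lreg g).restrict h) := rfl

lemma char_lin (S : Submodule (A G) (A G))
    (h1 : Module.finrank ℂ ↥(S.restrictScalars ℂ) = 1) {c : G} (hc : c ∈ commutator G) :
    (X S).character c = 1 := by
  have hmul : ∀ g h : G, (X S).character (g * h) = (X S).character g * (X S).character h := by
    intro g h
    have he' : (X S).character (g * h)
        = LinearMap.trace ℂ ↥(S.restrictScalars ℂ) ((resRep S g) ∘ₗ (resRep S h)) := by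
      show LinearMap.trace ℂ _ ((X S).ρ (g * h)) = _
      rw [map_mul]
      rfl
    rw [he', trace_mul_of_finrank_one h1]
    rfl
  let lam : G →* ℂ :=
    { toFun := (X S).character
      map_one' := by rw [FDRep.char_one]; exact_mod_cast congrArg (Nat.cast (R := ℂ)) h1
      map_mul' := hmul }
  have hker := Abelianization.commutator_subset_ker lam.toHomUnits hc
  have : lam.toHomUnits c = 1 := hker
  have := congrArg (Units.val) this
  rwa [MonoidHom.coe_toHomUnits] at this


theorem part1 (hVZ : IsVZ G) : commutator G ≤ Subgroup.center G := by
  classical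
  intro c hc
  by_contra hcZ
  have hc1 : c ≠ 1 := fun h => hcZ (h ▸ Subgroup.one_mem _)
  obtain ⟨s, hindep, hsup, hsimple⟩ :=
    IsSemisimpleModule.exists_sSupIndep_sSup_simples_eq_top (A G) (A G)
  haveI : IsNoetherian (A G) (A G) := isNoetherian_of_tower ℂ inferInstance
  have hfin : s.Finite := WellFoundedGT.finite_of_sSupIndep hindep
  haveI := hfin.fintype
  have hatom : ∀ i : s, IsAtom (i : Submodule (A G) (A G)) := fun i =>
    isSimpleModule_iff_isAtom.mp (hsimple i i.2)
  have hindep' : iSupIndep ((↑) : s → Submodule (A G) (A G)) := (sSupIndep_iff s).mp hindep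
  have hsup' : (⨆ i : s, (i : Submodule (A G) (A G))) = ⊤ := by
    rw [← sSup_eq_iSup']; exact hsup
  set N : s → Submodule ℂ (A G) := fun i => (i : Submodule (A G) (A G)).restrictScalars ℂ
    with hN
  have hNsup : (⨆ i : s, N i) = ⊤ := by
    rw [eq_top_iff]
    intro x _
    have hx : x ∈ ⨆ i : s, (i : Submodule (A G) (A G)) := hsup' ▸ Submodule.mem_top
    refine Submodule.iSup_induction' (motive := fun x _ => x ∈ ⨆ i : s, N i) _ ?_ ?_ ?_ hx
    · intro i x hxi
      exact Submodule.mem_iSup_of_mem i hxi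
    · exact Submodule.zero_mem _
    · intro x y _ _ hx hy; exact Submodule.add_mem _ hx hy
  have hNindep : iSupIndep N := by
    intro i
    rw [disjoint_iff, eq_bot_iff]
    intro x hx
    obtain ⟨hx1, hx2⟩ := Submodule.mem_inf.mp hx
    have hle : (⨆ (j : s) (_ : j ≠ i), N j)
        ≤ (⨆ (j : s) (_ : j ≠ i), (j : Submodule (A G) (A G))).restrictScalars ℂ := by
      refine iSup₂_le fun j hj => ?_
      intro y hy
      exact (le_iSup₂ (f := fun (j : s) (_ : j ≠ i) => (j : Submodule (A G) (A G))) j hj) hy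
    have hx2' : x ∈ (⨆ (j : s) (_ : j ≠ i), (j : Submodule (A G) (A G))) := hle hx2
    have : x ∈ (⊥ : Submodule (A G) (A G)) := by
      rw [← disjoint_iff.mp (hindep' i)]
      exact Submodule.mem_inf.mpr ⟨hx1, hx2'⟩
    exact this
  have hInternal : DirectSum.IsInternal N :=
    (DirectSum.isInternal_submodule_iff_iSupIndep_and_iSup_eq_top N).mpr ⟨hNindep, hNsup⟩
  have hmaps : ∀ i : s, Set.MapsTo (lreg c) (N i) (N i) := fun i => lreg_mapsTo _ c
  have htr := LinearMap.trace_eq_sum_trace_restrict hInternal hmaps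
  rw [trace_lreg c hc1] at htr
  -- each component contributes `T i`
  have hterm : ∀ i : s, (X (i : Submodule (A G) (A G))).character c
      = (if Module.finrank ℂ ↥(N i) = 1 then (1 : ℕ) else 0 : ℕ) := by
    intro i
    by_cases h1 : Module.finrank ℂ ↥(N i) = 1
    · rw [if_pos h1, char_lin _ h1 hc, Nat.cast_one]
    · rw [if_neg h1, Nat.cast_zero]
      refine hVZ _ ⟨X _, simpleX _ (hatom i), rfl⟩ ?_ c hcZ
      rw [FDRep.char_one]
      exact_mod_cast h1
  have hchar : ∀ i : s, LinearMap.trace ℂ ↥(N i) ((lreg c).restrict (hmaps i))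
      = (X (i : Submodule (A G) (A G))).character c := fun i => rfl
  have hsum : (((∑ i : s, if Module.finrank ℂ ↥(N i) = 1 then (1:ℕ) else 0) : ℕ) : ℂ) = 0 := by
    push_cast
    rw [← Finset.sum_congr rfl (fun i _ => ((hchar i).trans (hterm i)).symm)] at htr
    push_cast at htr
    exact htr.symm
  have hallzero : ∀ i : s, (if Module.finrank ℂ ↥(N i) = 1 then (1:ℕ) else 0) = 0 := by
    have h0 : (∑ i : s, if Module.finrank ℂ ↥(N i) = 1 then (1:ℕ) else 0) = 0 :=
      Nat.cast_injective (hsum.trans (Nat.cast_zero).symm)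
    intro i
    exact (Finset.sum_eq_zero_iff.mp h0) i (Finset.mem_univ i)
  -- a linear component exists via the augmentation map
  have hlin : ∃ i : s, Module.finrank ℂ ↥(N i) = 1 := by
    set ε := (MonoidAlgebra.lift ℂ ℂ G) 1 with hε
    have hε1 : ε 1 = 1 := map_one ε
    have hex : ∃ i : s, ∃ x ∈ (i : Submodule (A G) (A G)), ε x ≠ 0 := by
      by_contra h
      push_neg at h
      have hz : ∀ x : A G, ε x = 0 := by
        intro x
        have hx : x ∈ ⨆ i : s, (i : Submodule (A G) (A G)) := hsup' ▸ Submodule.mem_top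
        refine Submodule.iSup_induction' (motive := fun x _ => ε x = 0) _
          (fun i x hxi => h i x hxi) (map_zero ε)
          (fun x y _ _ hx hy => by
            have hx' : ε x = 0 := hx
            have hy' : ε y = 0 := hy
            show ε (x + y) = 0
            rw [map_add, hx', hy', add_zero]) hx
      rw [hz 1] at hε1
      exact one_ne_zero hε1.symm
    obtain ⟨i, x0, hx0i, hx0⟩ := hex
    refine ⟨i, le_antisymm ?_ ?_⟩
    · -- finrank ≤ 1 : ε restricted to N i is injective
      set εN : ↥(N i) →ₗ[ℂ] ℂ := ε.toLinearMap.comp (N i).subtype with hεN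
      have hpinv : ∀ g : G, ∀ x ∈ (LinearMap.ker εN).map (N i).subtype,
          (MonoidAlgebra.single g 1 : A G) * x ∈ (LinearMap.ker εN).map (N i).subtype := by
        rintro g x ⟨y, hy, rfl⟩
        refine ⟨⟨(MonoidAlgebra.single g 1 : A G) * (N i).subtype y,
          lreg_mapsTo _ g y.2⟩, ?_, rfl⟩
        have hy' : ε ((N i).subtype y) = 0 := hy
        show ε ((MonoidAlgebra.single g 1 : A G) * (N i).subtype y) = 0
        rw [map_mul, hy', mul_zero]
      have hqle : toA _ hpinv ≤ (i : Submodule (A G) (A G)) := by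
        rintro x ⟨y, _, rfl⟩
        exact y.2
      have hqne : toA _ hpinv ≠ (i : Submodule (A G) (A G)) := by
        intro hq
        have : x0 ∈ toA _ hpinv := by rw [hq]; exact hx0i
        obtain ⟨y, hy, hyx⟩ := this
        apply hx0
        have hy' : ε ((N i).subtype y) = 0 := hy
        rwa [hyx] at hy'
      have hqbot : toA _ hpinv = ⊥ := (hatom i).2 _ (lt_of_le_of_ne hqle hqne)
      have hinj : Function.Injective εN := by
        rw [← LinearMap.ker_eq_bot]
        ext y
        simp only [Submodule.mem_bot]
        constructor
        · intro hy
          have : (y : A G) ∈ toA _ hpinv := ⟨y, hy, rfl⟩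
          rw [hqbot] at this
          exact Subtype.ext this
        · rintro rfl; exact (LinearMap.ker εN).zero_mem
      simpa using LinearMap.finrank_le_finrank_of_injective hinj
    · -- 1 ≤ finrank : N i is nontrivial
      obtain ⟨z, hz, hz0⟩ := Submodule.exists_mem_ne_zero_of_ne_bot (hatom i).1
      haveI : Nontrivial ↥(N i) := ⟨⟨⟨z, hz⟩, 0, by simp [Subtype.ext_iff, hz0]⟩⟩
      exact Module.finrank_pos
  obtain ⟨i0, hi0⟩ := hlin
  have := hallzero i0
  rw [if_pos hi0] at this
  exact one_ne_zero this

end VZaux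
end VZauxSection

/-- For a VZ-group `G`, the commutator subgroup is contained in the center (so `G` has
nilpotency class at most 2), and every non-linear irreducible character `χ` satisfies
`χ(1)² = |G : Z(G)|`. -/
theorem stmt4 {G : Type} [Group G] [Fintype G] (hVZ : IsVZ G) :
    commutator G ≤ Subgroup.center G ∧
      ∀ χ : G → ℂ, IsIrrChar G χ → χ 1 ≠ 1 →
        (χ 1) ^ 2 = ((Subgroup.center G).index : ℂ) :=
  ⟨VZaux.part1 hVZ, fun χ h1 h2 => VZaux.part2 hVZ χ h1 h2⟩
end

section
/- Let G be a VZ-group, μ an irreducible character of Z(G) not containing G' in its kernel, and χ_μ the function on G defined by χ_μ(g) = |G/Z(G)|^{1/2}·μ(g) for g ∈ Z(G) and χ_μ(g) = 0 otherwise. Let H ≤ G be a subgroup of index |G/Z(G)|^{1/2} and ψ a linear character of H. Then the induced character ψ^G equals χ_μ if and only if H is normal in G, Z(G) ⊆ H, and the restriction of ψ to Z(G) equals μ. -/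
open scoped commutatorElement
open Classical in
/-- The induced character `ψ^G` of a character `ψ` of a subgroup `H ≤ G`. -/
noncomputable def inducedChar {G : Type} [Group G] [Fintype G] (H : Subgroup G)
    (ψ : ↥H → ℂ) : G → ℂ :=
  fun g => (Nat.card ↥H : ℂ)⁻¹ *
    ∑ x : G, if h : x * g * x⁻¹ ∈ H then ψ ⟨x * g * x⁻¹, h⟩ else 0

section VZauxSec
set_option linter.unusedSectionVars false
open CategoryTheory Module

namespace VZaux

variable {G : Type} [Group G] [Fintype G]

/-- The right regular representation of `G` on `G → ℂ`. -/
noncomputable def rr : Representation ℂ G (G → ℂ) where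
  toFun g :=
    { toFun := fun f x => f (x * g)
      map_add' := fun _ _ => rfl
      map_smul' := fun _ _ => rfl }
  map_one' := by ext f x; simp
  map_mul' g h := by ext f x; simp [mul_assoc]

@[simp] lemma rr_apply (g : G) (f : G → ℂ) (x : G) : rr g f x = f (x * g) := rfl

/-- The `μ`-eigenspace for the (commuting) left translation by the center. -/
noncomputable def eigS (μ : ↥(Subgroup.center G) →* ℂ) : Submodule ℂ (G → ℂ) where
  carrier := {f | ∀ (z : Subgroup.center G) (x : G), f (↑z * x) = μ z * f x}
  add_mem' := by
    intro a b ha hb z x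
    simp only [Pi.add_apply, ha z x, hb z x]; ring
  zero_mem' := by intro z x; simp
  smul_mem' := by
    intro c a ha z x
    simp only [Pi.smul_apply, ha z x, smul_eq_mul]; ring

lemma eigS_invariant (μ : ↥(Subgroup.center G) →* ℂ) (g : G) :
    ∀ f ∈ eigS μ, rr g f ∈ eigS μ := by
  intro f hf z x
  simpa [mul_assoc] using hf z (x * g)

lemma eigS_ne_bot (μ : ↥(Subgroup.center G) →* ℂ) : eigS μ ≠ ⊥ := by
  classical
  intro h
  have hmem : (fun x => if h : x ∈ Subgroup.center G then μ ⟨x, h⟩ else 0) ∈ eigS μ := by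
    intro z x
    by_cases hx : x ∈ Subgroup.center G
    · have hzx : (↑z * x) ∈ Subgroup.center G := mul_mem z.2 hx
      have : (⟨↑z * x, hzx⟩ : ↥(Subgroup.center G)) = z * ⟨x, hx⟩ := rfl
      simp [hx, hzx, this]
    · have hzx : (↑z * x) ∉ Subgroup.center G := by
        intro hc
        exact hx (by simpa using mul_mem (inv_mem z.2) hc)
      simp [hx, hzx]
  rw [h, Submodule.mem_bot] at hmem
  have h2 := congrFun hmem 1
  simp only [Pi.zero_apply, dif_pos (Subgroup.one_mem _)] at h2
  have : (⟨(1:G), Subgroup.one_mem _⟩ : ↥(Subgroup.center G)) = 1 := rfl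
  rw [this, map_one] at h2
  exact one_ne_zero h2

/-- Restriction of a representation to an invariant submodule. -/
noncomputable def subRep {M : Type} [AddCommGroup M] [Module ℂ M]
    (σ : Representation ℂ G M) (T : Submodule ℂ M)
    (hT : ∀ g, ∀ f ∈ T, σ g f ∈ T) : Representation ℂ G ↥T where
  toFun g := (σ g).restrict (hT g)
  map_one' := by
    apply LinearMap.ext; intro t; apply Subtype.ext
    simp [LinearMap.restrict_apply]
  map_mul' g h := by
    apply LinearMap.ext; intro t; apply Subtype.ext
    simp [LinearMap.restrict_apply]

@[simp] lemma subRep_apply {M : Type} [AddCommGroup M] [Module ℂ M]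
    (σ : Representation ℂ G M) (T : Submodule ℂ M)
    (hT : ∀ g, ∀ f ∈ T, σ g f ∈ T) (g : G) (t : ↥T) :
    (subRep σ T hT g t : M) = σ g ↑t := rfl

open Module in
lemma exists_simple_rep (μ : ↥(Subgroup.center G) →* ℂ) :
    ∃ V : FDRep ℂ G, Simple V ∧ Nontrivial V ∧
      ∀ z : ↥(Subgroup.center G), V.ρ (z : G) = (μ z) • (1 : V →ₗ[ℂ] V) := by
  classical
  set S := eigS μ with hS
  let P : ℕ → Prop := fun n => ∃ T : Submodule ℂ (G → ℂ),
    (T ≤ S ∧ T ≠ ⊥ ∧ ∀ g, ∀ f ∈ T, rr g f ∈ T) ∧ finrank ℂ ↥T = n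
  have hex : ∃ n, P n := ⟨_, S, ⟨le_rfl, eigS_ne_bot μ, eigS_invariant μ⟩, rfl⟩
  obtain ⟨T, ⟨hTS, hT0, hTinv⟩, hTrank⟩ := Nat.find_spec hex
  have hmin : ∀ T' : Submodule ℂ (G → ℂ), T' ≤ T → T' ≠ ⊥ →
      (∀ g, ∀ f ∈ T', rr g f ∈ T') → T' = T := by
    intro T' hle hne hinv
    have h1 : Nat.find hex ≤ finrank ℂ ↥T' := Nat.find_le ⟨T', ⟨hle.trans hTS, hne, hinv⟩, rfl⟩
    exact Submodule.eq_of_le_of_finrank_le hle (hTrank ▸ h1)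
  let ρ : Representation ℂ G ↥T := subRep rr T hTinv
  have hnt : Nontrivial ↥T := Submodule.nontrivial_iff_ne_bot.mpr hT0
  refine ⟨FDRep.of ρ, ?_, hnt, ?_⟩
  · constructor
    intro Y f hm
    constructor
    · -- IsIso f → f ≠ 0
      intro hiso h0
      obtain ⟨v, hv⟩ := exists_ne (0 : ↥T)
      rw [h0] at hiso
      have hid : 𝟙 (FDRep.of ρ) = 0 := by
        rw [← IsIso.inv_hom_id (0 : Y ⟶ FDRep.of ρ), Limits.comp_zero]
      have h2 : v = 0 := congrArg (fun (h : FDRep.of ρ ⟶ FDRep.of ρ) => h.hom v) hid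
      exact hv h2
    · -- f ≠ 0 → IsIso f
      intro h0
      have hfhom : f.hom ≠ 0 := by
        intro h
        exact h0 (Action.Hom.ext h)
      let φ : ↑Y.V →ₗ[ℂ] ↥T := f.hom.hom.hom
      have hc : ∀ (g : G) (y : ↑Y.V), φ ((Y.ρ g) y) = ρ g (φ y) := fun g y =>
        LinearMap.congr_fun (congrArg (fun k => k.hom.hom) (f.comm g)) y
      have hφ : φ ≠ 0 := fun h => hfhom (FGModuleCat.hom_ext h)
      -- the image of f, as a submodule of G → ℂ
      obtain ⟨y₀, hy₀⟩ := DFunLike.ne_iff.mp hφ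
      let R : Submodule ℂ (G → ℂ) := (LinearMap.range φ).map T.subtype
      have hRle : R ≤ T := Submodule.map_subtype_le _ _
      have hRne : R ≠ ⊥ := by
        rw [Submodule.ne_bot_iff]
        refine ⟨↑(φ y₀), ⟨φ y₀, LinearMap.mem_range_self _ _, rfl⟩, ?_⟩
        simpa using hy₀
      have hRinv : ∀ g, ∀ w ∈ R, rr g w ∈ R := by
        intro g w hw
        obtain ⟨u, ⟨y, rfl⟩, rfl⟩ := hw
        refine ⟨φ ((Y.ρ g) y), LinearMap.mem_range_self _ _, ?_⟩
        rw [hc g y]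
        rfl
      have hRT : R = T := hmin R hRle hRne hRinv
      have hsurj : Function.Surjective φ := by
        intro t
        have h3 : (t : G → ℂ) ∈ R := by rw [hRT]; exact t.2
        obtain ⟨u, ⟨y, rfl⟩, hu⟩ := h3
        exact ⟨y, Subtype.ext hu⟩
      -- kernel of f, as a subrepresentation of Y
      have hKinv : ∀ g, ∀ y ∈ LinearMap.ker φ, (Y.ρ g) y ∈ LinearMap.ker φ := by
        intro g y hy
        rw [LinearMap.mem_ker] at hy ⊢
        exact (hc g y).trans (by rw [hy, map_zero])
      let i : FDRep.of (subRep Y.ρ (LinearMap.ker φ) hKinv) ⟶ Y :=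
        ⟨FGModuleCat.ofHom (LinearMap.ker φ).subtype, fun g => rfl⟩
      have hif : i ≫ f = 0 ≫ f := by
        rw [Limits.zero_comp]
        apply Action.Hom.ext
        apply FGModuleCat.hom_ext
        apply LinearMap.ext
        intro y
        exact y.2
      have hi0 : i = 0 := (cancel_mono f).mp hif
      have hinj : Function.Injective φ := by
        rw [← LinearMap.ker_eq_bot, Submodule.eq_bot_iff]
        intro x hx
        have : i.hom.hom.hom ⟨x, hx⟩ = (0 : FDRep.of (subRep Y.ρ (LinearMap.ker φ) hKinv) ⟶ Y).hom.hom.hom ⟨x, hx⟩ := by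
          rw [hi0]
        exact this
      let e := LinearEquiv.ofBijective φ ⟨hinj, hsurj⟩
      refine ⟨⟨⟨FGModuleCat.ofHom e.symm.toLinearMap, ?_⟩, ?_, ?_⟩⟩
      · intro g
        apply FGModuleCat.hom_ext
        apply LinearMap.ext
        intro t
        apply e.injective
        show e (e.symm ((ρ g) t)) = e ((Y.ρ g) (e.symm t))
        have he : ∀ y, e y = φ y := fun _ => rfl
        rw [e.apply_symm_apply, he, hc g, show φ (e.symm t) = e (e.symm t) from rfl,
          e.apply_symm_apply]
      · apply Action.Hom.ext
        apply FGModuleCat.hom_ext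
        apply LinearMap.ext
        intro y
        exact e.symm_apply_apply y
      · apply Action.Hom.ext
        apply FGModuleCat.hom_ext
        apply LinearMap.ext
        intro t
        exact e.apply_symm_apply t
  · intro z
    apply LinearMap.ext
    intro t₀
    apply Subtype.ext
    let t : ↥T := t₀
    have ht : (t : G → ℂ) ∈ S := hTS t.2
    show rr (z : G) (t : G → ℂ) = ((μ z • (1 : ↥T →ₗ[ℂ] ↥T)) t : G → ℂ)
    have h1 : ((μ z • (1 : ↥T →ₗ[ℂ] ↥T)) t : G → ℂ) = μ z • (t : G → ℂ) := rfl
    rw [h1]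
    funext x
    show (t : G → ℂ) (x * (z : G)) = _
    calc (t : G → ℂ) (x * (z : G)) = (t : G → ℂ) ((z : G) * x) := by
          rw [Subgroup.mem_center_iff.mp z.2 x]
      _ = μ z * (t : G → ℂ) x := ht z x
      _ = (μ z • (t : G → ℂ)) x := rfl


lemma comm_mem (x g : G) : ⁅x, g⁆ ∈ commutator G := by
  rw [commutator_def]
  exact Subgroup.commutator_mem_commutator (Subgroup.mem_top x) (Subgroup.mem_top g)

open Module in
lemma nondeg
    (hVZ : ∀ χ : G → ℂ, (∃ V : FDRep ℂ G, CategoryTheory.Simple V ∧ FDRep.character V = χ) →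
      χ 1 ≠ 1 → ∀ g : G, g ∉ Subgroup.center G → χ g = 0)
    (hG' : commutator G ≤ Subgroup.center G)
    (μ : ↥(Subgroup.center G) →* ℂ)
    (hμ : ∃ c : ↥(Subgroup.center G), (c : G) ∈ commutator G ∧ μ c ≠ 1)
    {g : G} (hg : g ∉ Subgroup.center G) :
    ∃ x : G, μ ⟨⁅x, g⁆, hG' (comm_mem x g)⟩ ≠ 1 := by
  by_contra hdeg
  push_neg at hdeg
  obtain ⟨V, hsimp, hnt, hcent⟩ := exists_simple_rep μ
  obtain ⟨c₀, hc₀m, hc₀⟩ := hμ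
  set n := finrank ℂ V with hn
  have hnpos : 0 < n := finrank_pos
  -- determinant argument : μ c₀ ^ n = 1, hence n ≠ 1
  let d : G →* ℂ := (LinearMap.det).comp (V.ρ)
  have hdet1 : d.toHomUnits (c₀ : G) = 1 :=
    Abelianization.commutator_subset_ker d.toHomUnits hc₀m
  have h1 : d (c₀ : G) = 1 := by
    have h := congrArg Units.val hdet1
    rw [MonoidHom.coe_toHomUnits] at h
    simpa using h
  have h2 : LinearMap.det (V.ρ (c₀ : G)) = μ c₀ ^ n := by
    rw [hcent c₀, LinearMap.det_smul, Module.End.one_eq_id, LinearMap.det_id, mul_one]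
  have hdetc : μ c₀ ^ n = 1 := by rw [← h2]; exact h1
  have hn1 : n ≠ 1 := by
    intro h
    rw [h, pow_one] at hdetc
    exact hc₀ hdetc
  -- the character vanishes at g
  have hIrr : ∃ W : FDRep ℂ G, CategoryTheory.Simple W ∧ FDRep.character W = V.character :=
    ⟨V, hsimp, rfl⟩
  have hchar1 : V.character 1 ≠ 1 := by
    rw [FDRep.char_one]
    intro h
    exact hn1 (Nat.cast_eq_one.mp h)
  have hvan : V.character g = 0 := hVZ _ hIrr hchar1 g hg
  -- ρ g commutes with everything
  have hcomm : ∀ x : G, V.ρ (x * g) = V.ρ (g * x) := by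
    intro x
    have h4 : x * g = ⁅x, g⁆ * (g * x) := by group
    have h5 : V.ρ ⁅x, g⁆ = μ ⟨⁅x, g⁆, hG' (comm_mem x g)⟩ • (1 : V →ₗ[ℂ] V) :=
      hcent ⟨⁅x, g⁆, hG' (comm_mem x g)⟩
    rw [h4, map_mul, h5, hdeg x, one_smul, one_mul]
  let fmor : V ⟶ V :=
    { hom := FGModuleCat.ofHom (V.ρ g)
      comm := fun x => by
        have h6 : V.ρ g * V.ρ x = V.ρ x * V.ρ g := by
          rw [← map_mul, ← map_mul, ← hcomm x]
        exact FGModuleCat.hom_ext h6 }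
  -- Schur's lemma: fmor is a scalar
  have hrank : finrank ℂ (V ⟶ V) = 1 := by
    rw [FDRep.finrank_hom_simple_simple V V, if_pos ⟨Iso.refl V⟩]
  have hid0 : (𝟙 V : V ⟶ V) ≠ 0 := id_nonzero V
  obtain ⟨c, hcmul⟩ := (finrank_eq_one_iff_of_nonzero' (𝟙 V : V ⟶ V) hid0).mp hrank fmor
  have hsm : V.ρ g = c • (1 : V →ₗ[ℂ] V) := by
    have h7 := congrArg Action.Hom.hom hcmul
    rw [Action.smul_hom] at h7
    exact congrArg (fun k => k.hom.hom) h7.symm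
  -- trace computation
  have htr : V.character g = c * n := by
    show LinearMap.trace ℂ V (V.ρ g) = c * n
    rw [hsm, map_smul, LinearMap.trace_one, smul_eq_mul]
  have hc0 : c = 0 := by
    rw [hvan] at htr
    have hn0 : (n : ℂ) ≠ 0 := Nat.cast_ne_zero.mpr hnpos.ne'
    rcases mul_eq_zero.mp htr.symm with h | h
    · exact h
    · exact absurd h hn0
  have hρ0 : V.ρ g = 0 := by rw [hsm, hc0, zero_smul]
  obtain ⟨v, hv⟩ := exists_ne (0 : V)
  apply hv
  have h8 : V.ρ g⁻¹ (V.ρ g v) = v := by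
    rw [← Module.End.mul_apply, ← map_mul, inv_mul_cancel, map_one, Module.End.one_apply]
  rw [hρ0] at h8
  simpa using h8.symm

end VZaux

open CategoryTheory Module in
lemma VZaux.nondeg' {G : Type} [Group G] [Fintype G] (hVZ : IsVZ G)
    (hG' : commutator G ≤ Subgroup.center G)
    (μ : ↥(Subgroup.center G) →* ℂ)
    (hμ : ∃ c : ↥(Subgroup.center G), (c : G) ∈ commutator G ∧ μ c ≠ 1)
    {g : G} (hg : g ∉ Subgroup.center G) :
    ∃ x : G, μ ⟨⁅x, g⁆, hG' (VZaux.comm_mem x g)⟩ ≠ 1 :=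
  VZaux.nondeg (fun χ h => hVZ χ h) hG' μ hμ hg

open Classical in
lemma induced_at_central {G : Type} [Group G] [Fintype G] (H : Subgroup G) (ψ : ↥H →* ℂ)
    (hle : Subgroup.center G ≤ H) {z : G} (hz : z ∈ Subgroup.center G) :
    inducedChar H ⇑ψ z = (H.index : ℂ) * ψ ⟨z, hle hz⟩ := by
  classical
  have hconj : ∀ x : G, x * z * x⁻¹ = z := by
    intro x
    rw [Subgroup.mem_center_iff.mp hz x]
    group
  unfold inducedChar
  have hsc : (∑ x : G, if h : x * z * x⁻¹ ∈ H then ψ ⟨x * z * x⁻¹, h⟩ else 0)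
      = ∑ _x : G, ψ ⟨z, hle hz⟩ := by
    refine Finset.sum_congr rfl fun x _ => ?_
    simp only [hconj x]
    rw [dif_pos (hle hz)]
  rw [hsc, Finset.sum_const, Finset.card_univ, nsmul_eq_mul]
  have hcards : (Nat.card ↥H : ℂ) * (H.index : ℂ) = (Fintype.card G : ℂ) := by
    rw [← Nat.cast_mul, Subgroup.card_mul_index, Nat.card_eq_fintype_card]
  have hH0 : (Nat.card ↥H : ℂ) ≠ 0 := by
    simp [Nat.card_eq_fintype_card, Fintype.card_ne_zero]
  rw [← hcards]
  field_simp

end VZauxSec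

/-- Let `G` be a VZ-group, `μ ∈ Irr(Z(G))` with `G' ⊄ ker μ`, `m = |G/Z(G)|^{1/2}`, and let
`χ_μ` be the corresponding non-linear irreducible character (`χ_μ = m·μ` on `Z(G)` and `0`
elsewhere).  For `H ≤ G` of index `m` and a linear character `ψ` of `H`, the induced
character `ψ^G` equals `χ_μ` iff `H` is normal in `G`, `Z(G) ⊆ H`, and `ψ` restricts to `μ`
on `Z(G)`. -/
theorem stmt6 {G : Type} [Group G] [Fintype G] (hVZ : IsVZ G)
    (hG' : commutator G ≤ Subgroup.center G)
    (μ : ↥(Subgroup.center G) →* ℂ)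
    (hμ : ∃ g : ↥(Subgroup.center G), (g : G) ∈ commutator G ∧ μ g ≠ 1)
    {m : ℕ} (hm : m ^ 2 = (Subgroup.center G).index)
    (χμ : G → ℂ)
    (hχ1 : ∀ (g : G) (hg : g ∈ Subgroup.center G), χμ g = (m : ℂ) * μ ⟨g, hg⟩)
    (hχ2 : ∀ g : G, g ∉ Subgroup.center G → χμ g = 0)
    (H : Subgroup G) (hH : H.index = m) (ψ : ↥H →* ℂ) :
    inducedChar H ⇑ψ = χμ ↔
      H.Normal ∧ ∃ hle : Subgroup.center G ≤ H,
        ∀ (g : G) (hg : g ∈ Subgroup.center G), ψ ⟨g, hle hg⟩ = μ ⟨g, hg⟩ := by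
  classical
  have hm0 : m ≠ 0 := by
    intro h
    rw [h] at hm
    exact Subgroup.index_ne_zero_of_finite hm.symm
  have hmC : (m : ℂ) ≠ 0 := Nat.cast_ne_zero.mpr hm0
  constructor
  · intro heq
    have hle : Subgroup.center G ≤ H := by
      intro z hz
      by_contra hzH
      have hconj : ∀ x : G, x * z * x⁻¹ = z := by
        intro x
        rw [Subgroup.mem_center_iff.mp hz x]
        group
      have h1 := congrFun heq z
      have hL : inducedChar H ⇑ψ z = 0 := by
        unfold inducedChar
        rw [Finset.sum_eq_zero, mul_zero]
        intro x _
        rw [dif_neg]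
        intro hc
        rw [hconj x] at hc
        exact hzH hc
      rw [hL, hχ1 z hz] at h1
      have hμz : μ ⟨z, hz⟩ ≠ 0 := by
        have h2 : μ ⟨z, hz⟩ * μ (⟨z, hz⟩)⁻¹ = 1 := by
          rw [← map_mul, mul_inv_cancel, map_one]
        exact left_ne_zero_of_mul_eq_one h2
      exact hμz (by
        rcases mul_eq_zero.mp h1.symm with h | h
        · exact absurd h hmC
        · exact h)
    refine ⟨⟨fun h hh x => ?_⟩, hle, fun z hz => ?_⟩
    · have h3 : x * h * x⁻¹ = ⁅x, h⁆ * h := by group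
      rw [h3]
      exact H.mul_mem (hle (hG' (VZaux.comm_mem x h))) hh
    · have h1 := congrFun heq z
      rw [induced_at_central H ψ hle hz, hH, hχ1 z hz] at h1
      exact mul_left_cancel₀ hmC h1
  · rintro ⟨hN, hle, hres⟩
    funext g
    by_cases hgZ : g ∈ Subgroup.center G
    · rw [induced_at_central H ψ hle hgZ, hH, hχ1 g hgZ, hres g hgZ]
    · rw [hχ2 g hgZ]
      by_cases hgH : g ∈ H
      · unfold inducedChar
        have hterm : ∀ x : G, (if h : x * g * x⁻¹ ∈ H then ψ ⟨x * g * x⁻¹, h⟩ else 0)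
            = μ ⟨⁅x, g⁆, hG' (VZaux.comm_mem x g)⟩ * ψ ⟨g, hgH⟩ := by
          intro x
          have hxH : x * g * x⁻¹ ∈ H := hN.conj_mem g hgH x
          rw [dif_pos hxH]
          have hsplit : (⟨x * g * x⁻¹, hxH⟩ : ↥H)
              = ⟨⁅x, g⁆, hle (hG' (VZaux.comm_mem x g))⟩ * ⟨g, hgH⟩ := by
            apply Subtype.ext
            show x * g * x⁻¹ = ⁅x, g⁆ * g
            group
          rw [hsplit, map_mul, hres ⁅x, g⁆ (hG' (VZaux.comm_mem x g))]
        have hsc : (∑ x : G, if h : x * g * x⁻¹ ∈ H then ψ ⟨x * g * x⁻¹, h⟩ else 0)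
            = (∑ x : G, μ ⟨⁅x, g⁆, hG' (VZaux.comm_mem x g)⟩) * ψ ⟨g, hgH⟩ := by
          rw [Finset.sum_mul]
          exact Finset.sum_congr rfl fun x _ => hterm x
        rw [hsc]
        obtain ⟨x₀, hx₀⟩ := VZaux.nondeg' hVZ hG' μ hμ hgZ
        set f : G → ℂ := fun x => μ ⟨⁅x, g⁆, hG' (VZaux.comm_mem x g)⟩ with hf
        have hmul : ∀ x y : G, f (x * y) = f x * f y := by
          intro x y
          have h9 := Subgroup.mem_center_iff.mp (hG' (VZaux.comm_mem y g)) x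
          have h10 : ⁅x * y, g⁆ = ⁅y, g⁆ * ⁅x, g⁆ := by
            calc ⁅x * y, g⁆ = x * ⁅y, g⁆ * x⁻¹ * ⁅x, g⁆ := by group
              _ = ⁅y, g⁆ * x * x⁻¹ * ⁅x, g⁆ := by rw [h9]
              _ = ⁅y, g⁆ * ⁅x, g⁆ := by group
          have h11 : (⟨⁅x * y, g⁆, hG' (VZaux.comm_mem (x * y) g)⟩ : ↥(Subgroup.center G))
              = ⟨⁅y, g⁆, hG' (VZaux.comm_mem y g)⟩ * ⟨⁅x, g⁆, hG' (VZaux.comm_mem x g)⟩ :=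
            Subtype.ext h10
          show μ _ = μ _ * μ _
          rw [h11, map_mul]
          ring
        have hsum : (∑ x : G, f x) = 0 := by
          have h12 : ∑ x : G, f (x₀ * x) = ∑ x : G, f x :=
            Fintype.sum_equiv (Equiv.mulLeft x₀) _ _ fun x => rfl
          have h13 : f x₀ * ∑ x : G, f x = ∑ x : G, f x := by
            rw [Finset.mul_sum]
            calc (∑ x : G, f x₀ * f x) = ∑ x : G, f (x₀ * x) :=
                  Finset.sum_congr rfl fun x _ => (hmul x₀ x).symm
              _ = ∑ x : G, f x := h12
          have h14 : (f x₀ - 1) * ∑ x : G, f x = 0 := by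
            rw [sub_mul, one_mul, h13, sub_self]
          rcases mul_eq_zero.mp h14 with h | h
          · exact absurd (by linear_combination h) hx₀
          · exact h
        rw [hsum]
        ring
      · unfold inducedChar
        rw [Finset.sum_eq_zero, mul_zero]
        intro x _
        rw [dif_neg]
        intro hc
        apply hgH
        have h15 := hN.conj_mem _ hc x⁻¹
        have h16 : x⁻¹ * (x * g * x⁻¹) * x⁻¹⁻¹ = g := by group
        rwa [h16] at h15
end

section
/- Let G be a VZ-group with |G'| = p (p prime). If H is a subgroup of G of index |G/Z(G)|^{1/2} and ψ is a linear character of H such that ψ^G is a non-linear irreducible character of G, then H is abelian. -/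
open scoped commutatorElement

/-- In a VZ-group with `|G'| = p`, if `H ≤ G` has index `|G/Z(G)|^{1/2}` and `ψ` is a
linear character of `H` inducing a non-linear irreducible character of `G`, then `H` is
abelian. -/
theorem stmt8 {p : ℕ} (hp : p.Prime) {G : Type} [Group G] [Fintype G] (hVZ : IsVZ G)
    (hG' : Nat.card ↥(commutator G) = p)
    {m : ℕ} (hm : m ^ 2 = (Subgroup.center G).index)
    (H : Subgroup G) (hH : H.index = m) (ψ : ↥H →* ℂ)
    (hirr : IsIrrChar G (inducedChar H ⇑ψ)) (hnl : inducedChar H ⇑ψ 1 ≠ 1) :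
    ∀ x ∈ H, ∀ y ∈ H, x * y = y * x := by
  classical
  intro x hx y hy
  by_contra hxy
  -- ψ takes unit values
  have hψ_unit : ∀ h : H, ψ h ≠ 0 := by
    intro h
    have : ψ h * ψ h⁻¹ = 1 := by rw [← map_mul, mul_inv_cancel, map_one]
    exact left_ne_zero_of_mul_eq_one this
  -- the subgroup of H where ψ = 1
  let T : Subgroup ↥H :=
    { carrier := {h | ψ h = 1}
      one_mem' := map_one ψ
      mul_mem' := by
        intro a b ha hb
        simp only [Set.mem_setOf_eq] at *
        rw [map_mul, ha, hb, one_mul]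
      inv_mem' := by
        intro a ha
        simp only [Set.mem_setOf_eq] at *
        have : ψ a * ψ a⁻¹ = 1 := by rw [← map_mul, mul_inv_cancel, map_one]
        rw [ha, one_mul] at this
        exact this }
  let N : Subgroup G := T.map H.subtype
  have hNH : N ≤ H := by
    rintro g ⟨t, _, rfl⟩
    exact t.2
  -- ⁅H, H⁆ ≤ N
  have hHHN : ⁅H, H⁆ ≤ N := by
    rw [Subgroup.commutator_le]
    intro a ha b hb
    refine ⟨⁅(⟨a, ha⟩ : H), (⟨b, hb⟩ : H)⁆, ?_, rfl⟩
    show ψ ⁅(⟨a, ha⟩ : H), (⟨b, hb⟩ : H)⁆ = 1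
    have h1 : ψ (⟨a, ha⟩ : H) * ψ (⟨a, ha⟩ : H)⁻¹ = 1 := by
      rw [← map_mul, mul_inv_cancel, map_one]
    have h2 : ψ (⟨b, hb⟩ : H) * ψ (⟨b, hb⟩ : H)⁻¹ = 1 := by
      rw [← map_mul, mul_inv_cancel, map_one]
    rw [commutatorElement_def, map_mul, map_mul, map_mul,
      mul_right_comm (ψ ⟨a, ha⟩) (ψ ⟨b, hb⟩), h1, one_mul]
    exact h2
  -- ⁅H, H⁆ is nontrivial since x, y don't commute
  have hc : ⁅x, y⁆ ∈ ⁅H, H⁆ := Subgroup.commutator_mem_commutator hx hy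
  have hcne : ⁅x, y⁆ ≠ 1 := by
    intro h
    exact hxy (commutatorElement_eq_one_iff_mul_comm.mp h)
  -- commutator G ≤ ⁅H, H⁆ by the prime order argument
  have hHHle : ⁅H, H⁆ ≤ commutator G :=
    Subgroup.commutator_mono le_top le_top
  have hKle : commutator G ≤ ⁅H, H⁆ := by
    have hfact : Fact (Nat.card ↥(commutator G)).Prime := ⟨hG' ▸ hp⟩
    have := (Subgroup.subgroupOf ⁅H, H⁆ (commutator G)).eq_bot_or_eq_top_of_prime_card
    rcases this with hbot | htop
    · exfalso
      have : (⟨⁅x, y⁆, hHHle hc⟩ : ↥(commutator G)) ∈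
          Subgroup.subgroupOf ⁅H, H⁆ (commutator G) := hc
      rw [hbot, Subgroup.mem_bot] at this
      exact hcne (congrArg (Subtype.val) this)
    · exact Subgroup.subgroupOf_eq_top.mp htop
  have hKN : commutator G ≤ N := le_trans hKle hHHN
  -- compute the induced character on elements of H
  have hval : ∀ g (hg : g ∈ H),
      inducedChar H ⇑ψ g = (Nat.card ↥H : ℂ)⁻¹ * (Fintype.card G * ψ ⟨g, hg⟩) := by
    intro g hg
    unfold inducedChar
    congr 1
    have hterm : ∀ z : G,
        (if h : z * g * z⁻¹ ∈ H then ψ ⟨z * g * z⁻¹, h⟩ else 0) = ψ ⟨g, hg⟩ := by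
      intro z
      have hk : g⁻¹ * (z * g * z⁻¹) ∈ commutator G := by
        have : ⁅g⁻¹, z⁆ ∈ commutator G := by
          rw [commutator_def]
          exact Subgroup.commutator_mem_commutator (Subgroup.mem_top _)
            (Subgroup.mem_top _)
        have heq : ⁅g⁻¹, z⁆ = g⁻¹ * (z * g * z⁻¹) := by
          rw [commutatorElement_def]; group
        rwa [heq] at this
      have hkH : g⁻¹ * (z * g * z⁻¹) ∈ H := hNH (hKN hk)
      have hmem : z * g * z⁻¹ ∈ H := by
        have : z * g * z⁻¹ = g * (g⁻¹ * (z * g * z⁻¹)) := by group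
        rw [this]
        exact H.mul_mem hg hkH
      rw [dif_pos hmem]
      obtain ⟨t, ht, htval⟩ := hKN hk
      have hsub : (⟨z * g * z⁻¹, hmem⟩ : H) = ⟨g, hg⟩ * ⟨g⁻¹ * (z * g * z⁻¹), hkH⟩ := by
        ext
        show z * g * z⁻¹ = g * (g⁻¹ * (z * g * z⁻¹))
        group
      have hψk : ψ ⟨g⁻¹ * (z * g * z⁻¹), hkH⟩ = 1 := by
        have : (⟨g⁻¹ * (z * g * z⁻¹), hkH⟩ : H) = t := by
          ext; exact htval.symm
        rw [this]; exact ht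
      rw [hsub, map_mul, hψk, mul_one]
    rw [Finset.sum_congr rfl (fun z _ => hterm z), Finset.sum_const, Finset.card_univ,
      nsmul_eq_mul]
  -- hence the character is nonzero on x, so x ∈ Z(G) by VZ
  have hxval := hval x hx
  have hxne : inducedChar H ⇑ψ x ≠ 0 := by
    rw [hxval]
    apply mul_ne_zero
    · simp only [ne_eq, inv_eq_zero, Nat.cast_eq_zero]
      exact Nat.card_pos.ne'
    · exact mul_ne_zero (by exact_mod_cast Fintype.card_ne_zero) (hψ_unit _)
  have hxZ : x ∈ Subgroup.center G := by
    by_contra hxZ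
    exact hxne (hVZ _ hirr hnl x hxZ)
  exact hxy ((Subgroup.mem_center_iff.mp hxZ y).symm)
end

section
/- Let G be a VZ-group and let χ, ψ be irreducible complex characters of G. Then χ and ψ are Galois conjugate over ℚ if and only if ker(χ) = ker(ψ). -/
set_option maxHeartbeats 1000000

/-- The field of character values `ℚ(χ)`. -/
noncomputable def QChar {G : Type} (χ : G → ℂ) : Subfield ℂ :=
  Subfield.closure (Set.range χ)

/-- `χ` and `ψ` are Galois conjugate over `ℚ`. -/
def IsGaloisConjugate {G : Type} (χ ψ : G → ℂ) : Prop :=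
  QChar χ = QChar ψ ∧ ∃ σ : ↥(QChar χ) ≃+* ↥(QChar χ),
    ∀ g : G, (σ ⟨χ g, Subfield.subset_closure (Set.mem_range_self g)⟩ : ℂ) = ψ g

open IntermediateField Polynomial

private lemma qchar_eq {G : Type} (χ : G → ℂ) {ζ : ℂ}
    (hsub : Set.range χ ⊆ (ℚ⟮ζ⟯ : IntermediateField ℚ ℂ))
    (hmem : ζ ∈ QChar χ) : QChar χ = (ℚ⟮ζ⟯ : IntermediateField ℚ ℂ).toSubfield := by
  apply le_antisymm
  · exact Subfield.closure_le.mpr hsub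
  · have : (ℚ⟮ζ⟯ : IntermediateField ℚ ℂ) ≤
        Subfield.toIntermediateField (QChar χ)
          (fun x => by simpa [eq_ratCast] using SubfieldClass.ratCast_mem (QChar χ) x) := by
      rw [adjoin_le_iff]
      intro x hx
      rw [Set.mem_singleton_iff] at hx
      subst hx
      exact hmem
    intro x hx
    exact this hx

private lemma masterGC {G : Type} (χ ψ : G → ℂ) {n : ℕ} (hn : 0 < n) {ζ : ℂ}
    (hζ : IsPrimitiveRoot ζ n) {k : ℕ} (hk : Nat.Coprime k n)
    (hval : ∀ g, ∃ c m : ℕ, χ g = c * ζ ^ m ∧ ψ g = c * ζ ^ (m * k))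
    (h1 : ζ ∈ QChar χ) (h2 : ζ ∈ QChar ψ) : IsGaloisConjugate χ ψ := by
  have hint : IsIntegral ℚ ζ := (hζ.isIntegral hn).tower_top
  set F : IntermediateField ℚ ℂ := ℚ⟮ζ⟯ with hF
  have hζF : ζ ∈ F := mem_adjoin_simple_self ℚ ζ
  have hsubχ : Set.range χ ⊆ (F : Set ℂ) := by
    rintro _ ⟨g, rfl⟩
    obtain ⟨c, m, hc, -⟩ := hval g
    rw [hc]; exact mul_mem (_root_.natCast_mem _ c) (pow_mem hζF m)
  have hsubψ : Set.range ψ ⊆ (F : Set ℂ) := by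
    rintro _ ⟨g, rfl⟩
    obtain ⟨c, m, -, hc⟩ := hval g
    rw [hc]; exact mul_mem (_root_.natCast_mem _ c) (pow_mem hζF (m * k))
  have hQχ : QChar χ = F.toSubfield := qchar_eq χ hsubχ h1
  have hQψ : QChar ψ = F.toSubfield := qchar_eq ψ hsubψ h2
  -- the automorphism
  have hξ : IsPrimitiveRoot (ζ ^ k) n := hζ.pow_of_coprime k hk
  have hminp : minpoly ℚ ζ = minpoly ℚ (ζ ^ k) := by
    rw [← Polynomial.cyclotomic_eq_minpoly_rat hζ hn, Polynomial.cyclotomic_eq_minpoly_rat hξ hn]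
  let pb := IntermediateField.adjoin.powerBasis hint
  have hgen : (pb.gen : ℂ) = ζ := rfl
  let y : F := ⟨ζ ^ k, pow_mem hζF k⟩
  have hy : (Polynomial.aeval y) (minpoly ℚ pb.gen) = 0 := by
    apply Subtype.ext
    have hz : (ζ ^ k) = algebraMap F ℂ y := rfl
    have : ((Polynomial.aeval y) (minpoly ℚ pb.gen) : ℂ)
        = (Polynomial.aeval (ζ ^ k)) (minpoly ℚ pb.gen) := by
      rw [hz, Polynomial.aeval_algebraMap_apply]
      rfl
    rw [this]
    have : minpoly ℚ pb.gen = minpoly ℚ (ζ ^ k) := by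
      rw [IntermediateField.adjoin.powerBasis_gen]
      exact (minpoly_gen ℚ ζ).trans hminp
    rw [this, minpoly.aeval]
    rfl
  let σ₀ : F →ₐ[ℚ] F := pb.lift y hy
  have hσ₀gen : σ₀ pb.gen = y := pb.lift_gen y hy
  haveI : FiniteDimensional ℚ F := IntermediateField.adjoin.finiteDimensional hint
  have hinj : Function.Injective σ₀ := σ₀.toRingHom.injective
  have hbij : Function.Bijective σ₀ :=
    ⟨hinj, (LinearMap.injective_iff_surjective (f := σ₀.toLinearMap)).mp hinj⟩
  let σe : F ≃ₐ[ℚ] F := AlgEquiv.ofBijective σ₀ hbij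
  have hσeζ : ∀ (hz : ζ ∈ F), (σe ⟨ζ, hz⟩ : ℂ) = ζ ^ k := by
    intro hz
    have : (⟨ζ, hz⟩ : F) = pb.gen := by apply Subtype.ext; exact hgen.symm
    rw [this]
    show ((σ₀ pb.gen : F) : ℂ) = ζ ^ k
    rw [hσ₀gen]
  -- value computation
  have hkey : ∀ (x : F) (c m : ℕ), (x : ℂ) = c * ζ ^ m → (σe x : ℂ) = c * ζ ^ (m * k) := by
    intro x c m hx
    have hxx : x = (c : F) * (⟨ζ, hζF⟩ : F) ^ m := by
      apply Subtype.ext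
      push_cast
      exact hx
    rw [hxx, map_mul, map_pow, map_natCast]
    push_cast
    rw [hσeζ hζF]
    ring
  -- assemble
  refine ⟨hQχ.trans hQψ.symm, ?_⟩
  let e1 : ↥(QChar χ) ≃+* ↥(F.toSubfield) := RingEquiv.subfieldCongr hQχ
  let e2 : ↥(F.toSubfield) ≃+* F :=
    { toFun := fun x => ⟨x.1, x.2⟩
      invFun := fun x => ⟨x.1, x.2⟩
      left_inv := fun x => rfl
      right_inv := fun x => rfl
      map_mul' := fun x y => rfl
      map_add' := fun x y => rfl }
  refine ⟨e1.trans (e2.trans ((σe.toRingEquiv.trans e2.symm).trans e1.symm)), ?_⟩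
  intro g
  obtain ⟨c, m, hc, hp⟩ := hval g
  have hχgF : χ g ∈ F := hsubχ (Set.mem_range_self g)
  show ((e1.symm (e2.symm (σe (e2 (e1 ⟨χ g, _⟩))))) : ℂ) = ψ g
  have h5 : (e2 (e1 ⟨χ g, Subfield.subset_closure (Set.mem_range_self g)⟩)) = ⟨χ g, hχgF⟩ := rfl
  rw [h5]
  have h6 := hkey ⟨χ g, hχgF⟩ c m hc
  have : ((e1.symm (e2.symm (σe ⟨χ g, hχgF⟩))) : ℂ) = (σe ⟨χ g, hχgF⟩ : ℂ) := rfl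
  rw [this, h6, hp]

open CategoryTheory Module FDRep

private lemma finrank_one_scalar {M : Type} [AddCommGroup M] [Module ℂ M]
    (h : finrank ℂ M = 1) (f : M →ₗ[ℂ] M) : ∃ c : ℂ, f = c • LinearMap.id := by
  obtain ⟨v, hv0, hv⟩ := finrank_eq_one_iff'.mp h
  obtain ⟨c, hc⟩ := hv (f v)
  refine ⟨c, ?_⟩
  apply LinearMap.ext
  intro w
  obtain ⟨a, rfl⟩ := hv w
  rw [map_smul, ← hc]
  simp [smul_comm a c v]

private lemma rho_scalar_center {G : Type} [Group G] (V : FDRep ℂ G) [Simple V]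
    {z : G} (hz : z ∈ Subgroup.center G) : ∃ c : ℂ, V.ρ z = c • LinearMap.id := by
  classical
  have key : ∀ g : G, V.ρ z * V.ρ g = V.ρ g * V.ρ z := by
    intro g
    rw [← map_mul, ← map_mul, Subgroup.mem_center_iff.mp hz g]
  let f : V ⟶ V := ⟨FGModuleCat.ofHom (V.ρ z), fun g => by
    ext x; exact LinearMap.congr_fun (key g) x⟩
  obtain ⟨c, hc⟩ := CategoryTheory.endomorphism_simple_eq_smul_id ℂ f
  refine ⟨c, ?_⟩
  have h2 : (c • 𝟙 V : V ⟶ V).hom.hom.hom = f.hom.hom.hom := by rw [hc]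
  have h3 : (c • 𝟙 V : V ⟶ V).hom.hom.hom = c • (𝟙 V : V ⟶ V).hom.hom.hom := rfl
  have h4 : f.hom.hom.hom = V.ρ z := rfl
  rw [h4, h3] at h2
  exact h2.symm

private lemma char_mul_of_scalar {G : Type} [Group G] (V : FDRep ℂ G) {z : G}
    (h : ∃ c : ℂ, V.ρ z = c • LinearMap.id) (g : G) :
    V.character 1 * V.character (z * g) = V.character z * V.character g := by
  obtain ⟨c, hc⟩ := h
  have h1 : V.character (z * g) = c * V.character g := by
    show LinearMap.trace ℂ V (V.ρ (z * g)) = _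
    rw [map_mul, hc]
    have : (c • LinearMap.id : V →ₗ[ℂ] V) * V.ρ g = c • V.ρ g := by
      rw [smul_mul_assoc]
      congr 1
    rw [this, map_smul]
    rfl
  have h2 : V.character z = c * V.character 1 := by
    show LinearMap.trace ℂ V (V.ρ z) = _
    rw [hc, map_smul]
    have : V.character 1 = LinearMap.trace ℂ V (V.ρ 1) := rfl
    rw [this, map_one]
    rfl
  rw [h1, h2]; ring

private lemma char_sum_card {G : Type} [Group G] [Fintype G] (V : FDRep ℂ G) [Simple V] :
    ∑ g : G, V.character g * V.character g⁻¹ = (Fintype.card G : ℂ) := by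
  classical
  have hne : (Nat.card G : ℂ) ≠ 0 := by exact_mod_cast Nat.card_pos.ne'
  haveI : Invertible ((Nat.card G : ℂ)) := invertibleOfNonzero hne
  have h := FDRep.char_orthonormal (k := ℂ) V V
  rw [if_pos ⟨Iso.refl V⟩, inv_mul_eq_iff_eq_mul₀ hne] at h
  rw [h, Nat.card_eq_fintype_card]
  simp

-- the degree/cardinality formula
private lemma card_formula {G : Type} [Group G] [Fintype G] {χ : G → ℂ}
    (hχ : IsIrrChar G χ) (H : Subgroup G) (hvan : ∀ g, g ∉ H → χ g = 0)
    (hmul : ∀ z ∈ H, ∀ g, χ 1 * χ (z * g) = χ z * χ g) :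
    (Nat.card H : ℂ) * (χ 1) ^ 2 = Fintype.card G := by
  classical
  obtain ⟨V, hs, rfl⟩ := hχ
  haveI := hs
  have hsum := char_sum_card V
  have hterm : ∀ g : G, V.character g * V.character g⁻¹ =
      if g ∈ H then (V.character 1) ^ 2 else 0 := by
    intro g
    by_cases hg : g ∈ H
    · rw [if_pos hg]
      have := hmul g hg g⁻¹
      rw [mul_inv_cancel] at this
      rw [← this]; ring
    · rw [if_neg hg, hvan g hg, zero_mul]
  rw [Finset.sum_congr rfl (fun g _ => hterm g)] at hsum
  rw [Finset.sum_ite, Finset.sum_const, Finset.sum_const_zero, add_zero] at hsum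
  rw [← hsum]
  have : Nat.card H = (Finset.filter (fun g => g ∈ H) Finset.univ).card := by
    rw [Nat.card_eq_fintype_card]
    exact Fintype.card_subtype _
  rw [this]
  simp [nsmul_eq_mul]

private lemma keyStruct {G : Type} [Group G] [Fintype G] (hVZ : IsVZ G)
    {χ : G → ℂ} (hχ : IsIrrChar G χ) :
    ∃ (H : Subgroup G) (d : ℕ),
      χ 1 = (d : ℂ) ∧ 0 < d ∧
      (∀ g, g ∉ H → χ g = 0) ∧
      (∀ z ∈ H, ∀ g, χ 1 * χ (z * g) = χ z * χ g) ∧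
      ((Nat.card H : ℂ) * (d : ℂ) ^ 2 = Fintype.card G) ∧
      ((χ 1 = 1 → H = ⊤) ∧ (χ 1 ≠ 1 → H = Subgroup.center G)) := by
  classical
  obtain ⟨V, hs, hcV⟩ := hχ
  haveI := hs
  have hone : χ 1 = (finrank ℂ V : ℂ) := by rw [← hcV]; exact FDRep.char_one V
  by_cases hlin : χ 1 = 1
  · -- linear case
    refine ⟨⊤, finrank ℂ V, hone, ?_, by simp, ?_, ?_, fun _ => rfl, fun h => absurd hlin h⟩
    · by_contra h
      push_neg at h
      interval_cases h' : finrank ℂ V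
      · rw [hone] at hlin; norm_num [h'] at hlin
    · intro z _ g
      apply_fun id at hcV
      subst hcV
      exact char_mul_of_scalar V (finrank_one_scalar (by
        have : ((finrank ℂ V : ℂ)) = 1 := hone ▸ hlin
        exact_mod_cast this) _) g
    · have := card_formula ⟨V, hs, hcV⟩ ⊤ (by simp) ?_
      · rw [← hone]
        rw [← this, hone]
      · intro z _ g
        subst hcV
        exact char_mul_of_scalar V (finrank_one_scalar (by
          have : ((finrank ℂ V : ℂ)) = 1 := hone ▸ hlin
          exact_mod_cast this) _) g
  · -- nonlinear case
    have hvan : ∀ g, g ∉ Subgroup.center G → χ g = 0 := hVZ χ ⟨V, hs, hcV⟩ hlin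
    have hmul : ∀ z ∈ Subgroup.center G, ∀ g, χ 1 * χ (z * g) = χ z * χ g := by
      intro z hz g
      subst hcV
      exact char_mul_of_scalar V (rho_scalar_center V hz) g
    have hcard := card_formula ⟨V, hs, hcV⟩ _ hvan hmul
    refine ⟨Subgroup.center G, finrank ℂ V, hone, ?_, hvan, hmul, by rw [← hone]; exact hcard,
      fun h => absurd h hlin, fun _ => rfl⟩
    by_contra h
    push_neg at h
    interval_cases h' : finrank ℂ V
    · norm_num at hcard
      have hne : (Fintype.card G : ℂ) ≠ 0 := Nat.cast_ne_zero.mpr Fintype.card_ne_zero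
      simp_all

private lemma exists_hom {G : Type} [Group G] {χ : G → ℂ} (H : Subgroup G)
    (hmul : ∀ z ∈ H, ∀ g, χ 1 * χ (z * g) = χ z * χ g) (h1 : χ 1 ≠ 0) :
    ∃ μ : H →* ℂˣ, ∀ h : H, (μ h : ℂ) = χ h / χ 1 := by
  have hinv : ∀ h : H, (χ (h : G) / χ 1) * (χ ((h⁻¹ : H) : G) / χ 1) = 1 := by
    intro h
    have h2 := hmul (h : G) h.2 ((h⁻¹ : H) : G)
    have h3 : ((h : G) * ((h⁻¹ : H) : G)) = 1 := by
      rw [← Subgroup.coe_mul, mul_inv_cancel, Subgroup.coe_one]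
    rw [h3] at h2
    rw [div_mul_div_comm, ← h2, div_self (mul_ne_zero h1 h1)]
  refine ⟨{ toFun := fun h => Units.mkOfMulEqOne _ _ (hinv h), map_one' := ?_, map_mul' := ?_ },
    fun h => rfl⟩
  · apply Units.ext
    show χ ((1 : H) : G) / χ 1 = 1
    rw [Subgroup.coe_one, div_self h1]
  · intro a b
    apply Units.ext
    show χ ((a * b : H) : G) / χ 1 = (χ (a : G) / χ 1) * (χ (b : G) / χ 1)
    rw [Subgroup.coe_mul, div_mul_div_comm, div_eq_div_iff h1 (mul_ne_zero h1 h1)]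
    linear_combination χ 1 * (hmul (a : G) a.2 (b : G))

private lemma hom_powers {G : Type} [Group G] [Fintype G] {H : Subgroup G}
    (μ ν : H →* ℂˣ) (hker : ∀ h : H, μ h = 1 ↔ ν h = 1) :
    ∃ (n k : ℕ) (ζ : ℂˣ), 0 < n ∧ IsPrimitiveRoot ((ζ : ℂ)) n ∧ Nat.Coprime k n ∧
      (∀ h : H, ∃ m : ℕ, μ h = ζ ^ m ∧ ν h = ζ ^ (m * k)) ∧
      (∃ h : H, μ h = ζ) ∧ (∃ h : H, ν h = ζ) := by
  classical
  haveI : Finite (↥μ.range) := Finite.of_surjective _ μ.rangeRestrict_surjective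
  haveI : IsCyclic (↥μ.range) := subgroup_units_cyclic _
  haveI : IsCyclic (H ⧸ μ.ker) :=
    isCyclic_of_surjective (QuotientGroup.quotientKerEquivRange μ).symm
      (QuotientGroup.quotientKerEquivRange μ).symm.surjective
  obtain ⟨q, hq⟩ := IsCyclic.exists_generator (α := H ⧸ μ.ker)
  set n := Nat.card (H ⧸ μ.ker) with hn'
  have hn : 0 < n := Nat.card_pos
  haveI : NeZero n := ⟨hn.ne'⟩
  have horder : orderOf q = n := orderOf_eq_card_of_forall_mem_zpowers hq
  obtain ⟨h₀, hh₀⟩ := QuotientGroup.mk'_surjective μ.ker q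
  set ζ := μ h₀ with hζdef
  set ζ' := ν h₀ with hζ'def
  have hordζ : orderOf ζ = n := by
    have h5 := orderOf_injective (QuotientGroup.kerLift μ) (QuotientGroup.kerLift_injective μ)
      (QuotientGroup.mk' μ.ker h₀)
    have h6 : (QuotientGroup.kerLift μ) ((QuotientGroup.mk' μ.ker) h₀) = μ h₀ :=
      QuotientGroup.kerLift_mk μ h₀
    rw [h6] at h5
    rw [h5, hh₀, horder]
  have hprim : IsPrimitiveRoot ζ n := by
    have := IsPrimitiveRoot.orderOf ζ
    rwa [hordζ] at this
  have hprimC : IsPrimitiveRoot ((ζ : ℂ)) n := IsPrimitiveRoot.coe_units_iff.mpr hprim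
  have hmemker : ∀ h : H, h ∈ μ.ker ↔ QuotientGroup.mk' μ.ker h = 1 := by
    intro h
    constructor
    · intro hh; exact (QuotientGroup.eq_one_iff h).mpr hh
    · intro hh; exact (QuotientGroup.eq_one_iff h).mp hh
  have hζ'pow : ζ' ^ n = 1 := by
    have hq1 : QuotientGroup.mk' μ.ker (h₀ ^ n) = 1 := by
      rw [map_pow, hh₀, ← horder, pow_orderOf_eq_one]
    have h9 : h₀ ^ n ∈ μ.ker := (hmemker _).mpr hq1
    have h10 : μ (h₀ ^ n) = 1 := h9
    have h11 : ν (h₀ ^ n) = 1 := (hker _).mp h10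
    rwa [map_pow] at h11
  obtain ⟨k, hkn, hζk⟩ := hprimC.eq_pow_of_pow_eq_one (ξ := ((ζ' : ℂ)))
    (by rw [← Units.val_pow_eq_pow_val, hζ'pow, Units.val_one])
  have hu : ζ ^ k = ζ' := Units.ext (by exact_mod_cast hζk)
  have hordζ' : orderOf ζ' = n := by
    apply Nat.dvd_antisymm (orderOf_dvd_of_pow_eq_one hζ'pow)
    have hpow : ν (h₀ ^ orderOf ζ') = 1 := by rw [map_pow, pow_orderOf_eq_one]
    have h12 : μ (h₀ ^ orderOf ζ') = 1 := (hker _).mpr hpow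
    have h13 : QuotientGroup.mk' μ.ker (h₀ ^ orderOf ζ') = 1 := (hmemker _).mp h12
    rw [map_pow, hh₀] at h13
    rw [← horder]
    exact orderOf_dvd_of_pow_eq_one h13
  have hg : Nat.gcd n k = 1 := by
    rcases Nat.eq_zero_or_pos k with rfl | hkpos
    · have hn1 : n = 1 := by rw [← hordζ', ← hu, pow_zero, orderOf_one]
      simp [hn1]
    · have h7 : orderOf (ζ ^ k) = orderOf ζ / Nat.gcd (orderOf ζ) k := by
        apply orderOf_pow'
        exact hkpos.ne'
      rw [hordζ, hu, hordζ'] at h7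
      rcases Nat.div_eq_self.mp h7.symm with h | h
      · exact absurd h hn.ne'
      · exact h
  have hcop : Nat.Coprime k n := Nat.coprime_comm.mp hg
  refine ⟨n, k, ζ, hn, hprimC, hcop, ?_, ⟨h₀, rfl⟩, ?_⟩
  · intro h
    obtain ⟨m, hm0⟩ := mem_powers_iff_mem_zpowers.mpr (hq (QuotientGroup.mk' μ.ker h))
    have hm : q ^ m = QuotientGroup.mk' μ.ker h := hm0
    have hmemk : (h₀ ^ m)⁻¹ * h ∈ μ.ker := by
      rw [hmemker, map_mul, map_inv, map_pow, hh₀, hm, inv_mul_cancel]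
    have hμ : μ h = ζ ^ m := by
      have h14 : μ ((h₀ ^ m)⁻¹ * h) = 1 := hmemk
      rw [map_mul, map_inv, map_pow] at h14
      exact (inv_mul_eq_one.mp h14).symm
    have hν : ν h = ζ ^ (m * k) := by
      have hmemk' : (h₀ ^ m)⁻¹ * h ∈ ν.ker := (hker _).mp hmemk
      have h15 : ν ((h₀ ^ m)⁻¹ * h) = 1 := hmemk'
      rw [map_mul, map_inv, map_pow] at h15
      have h8 : ν h = ζ' ^ m := (inv_mul_eq_one.mp h15).symm
      rw [h8, ← hu, ← pow_mul, Nat.mul_comm k m]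
    exact ⟨m, hμ, hν⟩
  · by_cases hn1 : n = 1
    · refine ⟨1, ?_⟩
      have hz1 : ζ = 1 := by
        have h16 := hordζ
        rw [hn1] at h16
        exact orderOf_eq_one_iff.mp h16
      rw [map_one, hz1]
    · obtain ⟨k', -, hk'⟩ := Nat.exists_mul_mod_eq_one_of_coprime hcop
        (lt_of_le_of_ne hn (Ne.symm hn1))
      refine ⟨h₀ ^ k', ?_⟩
      rw [map_pow]
      show ζ' ^ k' = ζ
      rw [← hu, ← pow_mul]
      have h17 : ζ ^ (k * k') = ζ ^ ((k * k') % n) := by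
        rw [← hordζ]
        exact (pow_mod_orderOf ζ (k * k')).symm
      rw [h17, hk', pow_one]

private lemma mixed_contra {G : Type} [Group G] [Fintype G] {χ ψ : G → ℂ} {d₂ : ℕ}
    (hK : {g : G | χ g = χ 1} = {g : G | ψ g = ψ 1})
    (hlin : χ 1 = 1)
    (hmul₁ : ∀ z ∈ (⊤ : Subgroup G), ∀ g, χ 1 * χ (z * g) = χ z * χ g)
    (hψ1 : ψ 1 = (d₂ : ℂ)) (hd₂pos : 0 < d₂)
    (hvan₂ : ∀ g, g ∉ Subgroup.center G → ψ g = 0)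
    (hcard₂ : (Nat.card (Subgroup.center G) : ℂ) * (d₂ : ℂ) ^ 2 = Fintype.card G) :
    ψ 1 = 1 := by
  classical
  have hχ1ne : χ 1 ≠ 0 := by rw [hlin]; exact one_ne_zero
  obtain ⟨μ, hμ⟩ := exists_hom ⊤ hmul₁ hχ1ne
  let μ' : G →* ℂˣ := μ.comp (Subgroup.topEquiv.symm.toMonoidHom)
  have hψ1ne : ψ 1 ≠ 0 := by
    rw [hψ1]
    exact_mod_cast hd₂pos.ne'
  have hkerle : μ'.ker ≤ Subgroup.center G := by
    intro g hg
    have hval : (μ' g : ℂ) = χ g / χ 1 := hμ _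
    have hg1 : (μ' g : ℂ) = 1 := by rw [hg]; rfl
    have hχg : χ g = χ 1 := by
      rw [hval] at hg1
      field_simp at hg1
      exact hg1
    have : g ∈ {g : G | ψ g = ψ 1} := by rw [← hK]; exact hχg
    by_contra hgc
    exact hψ1ne (by rw [← this]; exact hvan₂ g hgc)
  haveI : Finite (↥μ'.range) := Finite.of_surjective _ μ'.rangeRestrict_surjective
  haveI : IsCyclic (↥μ'.range) := subgroup_units_cyclic _
  have hcomm : ∀ a b : G, a * b = b * a :=
    commutative_of_cyclic_center_quotient μ'.rangeRestrict
      (by rw [MonoidHom.ker_rangeRestrict]; exact hkerle)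
  have hcen : Subgroup.center G = ⊤ := by
    ext g
    simp only [Subgroup.mem_top, iff_true]
    exact Subgroup.mem_center_iff.mpr (fun h => hcomm h g)
  rw [hcen] at hcard₂
  have hct : (Nat.card (⊤ : Subgroup G) : ℂ) = (Fintype.card G : ℂ) := by
    rw [Subgroup.card_top, Nat.card_eq_fintype_card]
  rw [hct] at hcard₂
  have hGne : (Fintype.card G : ℂ) ≠ 0 := Nat.cast_ne_zero.mpr Fintype.card_ne_zero
  have hd2 : ((d₂ : ℂ)) ^ 2 = 1 :=
    mul_left_cancel₀ hGne (hcard₂.trans (mul_one _).symm)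
  have : (d₂ : ℕ) ^ 2 = 1 := by exact_mod_cast hd2
  have : d₂ = 1 := by nlinarith [this]
  rw [hψ1, this, Nat.cast_one]

/-- In a VZ-group, two irreducible complex characters are Galois conjugate over `ℚ` if and
only if they have the same kernel. -/
theorem stmt10 {G : Type} [Group G] [Fintype G] (hVZ : IsVZ G)
    (χ ψ : G → ℂ) (hχ : IsIrrChar G χ) (hψ : IsIrrChar G ψ) :
    IsGaloisConjugate χ ψ ↔ {g : G | χ g = χ 1} = {g : G | ψ g = ψ 1} := by
  classical
  constructor
  · rintro ⟨hQ, σ, hσ⟩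
    ext g
    simp only [Set.mem_setOf_eq]
    constructor
    · intro hg
      have h1 : (⟨χ g, Subfield.subset_closure (Set.mem_range_self g)⟩ : ↥(QChar χ))
          = ⟨χ 1, Subfield.subset_closure (Set.mem_range_self 1)⟩ := Subtype.ext hg
      rw [← hσ g, h1, hσ 1]
    · intro hg
      have e1 : (σ ⟨χ g, Subfield.subset_closure (Set.mem_range_self g)⟩ : ℂ)
          = (σ ⟨χ 1, Subfield.subset_closure (Set.mem_range_self 1)⟩ : ℂ) := by
        rw [hσ g, hσ 1, hg]
      have e3 := σ.injective (Subtype.ext e1)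
      exact congrArg Subtype.val e3
  · intro hK
    obtain ⟨H₁, d₁, hχ1, hd₁, hvan₁, hmul₁, hcard₁, hdic₁⟩ := keyStruct hVZ hχ
    obtain ⟨H₂, d₂, hψ1, hd₂, hvan₂, hmul₂, hcard₂, hdic₂⟩ := keyStruct hVZ hψ
    have hχ1ne : χ 1 ≠ 0 := by rw [hχ1]; exact_mod_cast hd₁.ne'
    have hψ1ne : ψ 1 ≠ 0 := by rw [hψ1]; exact_mod_cast hd₂.ne'
    -- both linear or both non-linear
    have hHeq : H₁ = H₂ := by
      by_cases hc1 : χ 1 = 1 <;> by_cases hc2 : ψ 1 = 1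
      · rw [hdic₁.1 hc1, hdic₂.1 hc2]
      · exfalso
        apply hc2
        exact mixed_contra hK hc1 (by rw [← hdic₁.1 hc1]; exact hmul₁) hψ1 hd₂
          (by rw [← hdic₂.2 hc2]; exact hvan₂) (by rw [← hdic₂.2 hc2]; exact hcard₂)
      · exfalso
        apply hc1
        exact mixed_contra hK.symm hc2 (by rw [← hdic₂.1 hc2]; exact hmul₂) hχ1 hd₁
          (by rw [← hdic₁.2 hc1]; exact hvan₁) (by rw [← hdic₁.2 hc1]; exact hcard₁)
      · rw [hdic₁.2 hc1, hdic₂.2 hc2]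
    subst hHeq
    -- equal degrees
    have hcardH : (Nat.card H₁ : ℂ) ≠ 0 := by
      have : 0 < Nat.card H₁ := Nat.card_pos
      exact_mod_cast this.ne'
    have hdd : d₁ = d₂ := by
      have h2 : (d₁ : ℂ) ^ 2 = (d₂ : ℂ) ^ 2 :=
        mul_left_cancel₀ hcardH (hcard₁.trans hcard₂.symm)
      have h3 : d₁ ^ 2 = d₂ ^ 2 := by exact_mod_cast h2
      nlinarith [h3, hd₁, hd₂]
    -- homomorphisms
    obtain ⟨μ, hμ⟩ := exists_hom H₁ hmul₁ hχ1ne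
    obtain ⟨ν, hν⟩ := exists_hom H₁ hmul₂ hψ1ne
    have hKiff : ∀ g : G, χ g = χ 1 ↔ ψ g = ψ 1 := by
      intro g
      constructor
      · intro h; have : g ∈ {g : G | χ g = χ 1} := h; rw [hK] at this; exact this
      · intro h; have : g ∈ {g : G | ψ g = ψ 1} := h; rw [← hK] at this; exact this
    have hker : ∀ h : H₁, μ h = 1 ↔ ν h = 1 := by
      intro h
      rw [Units.ext_iff, Units.ext_iff]
      show (μ h : ℂ) = 1 ↔ (ν h : ℂ) = 1
      rw [hμ h, hν h, div_eq_one_iff_eq hχ1ne, div_eq_one_iff_eq hψ1ne]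
      exact hKiff h
    obtain ⟨n, k, ζu, hn, hprimC, hcop, hpows, ⟨hm, hmζ⟩, ⟨hm', hmζ'⟩⟩ := hom_powers μ ν hker
    -- values
    have hval : ∀ g, ∃ c m : ℕ, χ g = c * (ζu : ℂ) ^ m ∧ ψ g = c * (ζu : ℂ) ^ (m * k) := by
      intro g
      by_cases hg : g ∈ H₁
      · obtain ⟨m, hm1, hm2⟩ := hpows ⟨g, hg⟩
        refine ⟨d₁, m, ?_, ?_⟩
        · have h4 := hμ ⟨g, hg⟩
          rw [eq_comm, div_eq_iff hχ1ne] at h4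
          rw [hm1] at h4
          have h5 : χ g = ((ζu ^ m : ℂˣ) : ℂ) * χ 1 := h4
          rw [h5, hχ1, Units.val_pow_eq_pow_val]
          ring
        · have h4 := hν ⟨g, hg⟩
          rw [eq_comm, div_eq_iff hψ1ne] at h4
          rw [hm2] at h4
          have h5 : ψ g = ((ζu ^ (m * k) : ℂˣ) : ℂ) * ψ 1 := h4
          rw [h5, hψ1, Units.val_pow_eq_pow_val, ← hdd]
          ring
      · exact ⟨0, 0, by simp [hvan₁ g hg], by simp [hvan₂ g hg]⟩
    have hζχ : (ζu : ℂ) ∈ QChar χ := by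
      have h5 := hμ hm
      rw [hmζ] at h5
      rw [h5]
      exact Subfield.div_mem _ (Subfield.subset_closure (Set.mem_range_self _))
        (Subfield.subset_closure (Set.mem_range_self 1))
    have hζψ : (ζu : ℂ) ∈ QChar ψ := by
      have h5 := hν hm'
      rw [hmζ'] at h5
      rw [h5]
      exact Subfield.div_mem _ (Subfield.subset_closure (Set.mem_range_self _))
        (Subfield.subset_closure (Set.mem_range_self 1))
    exact masterGC χ ψ hn hprimC hcop hval hζχ hζψ
end

section
/- Let G be a VZ-group, μ ∈ Irr(Z(G)) with G' ⊄ ker(μ), and χ_μ the corresponding non-linear irreducible character of G. Let H ≤ G have index |G/Z(G)|^{1/2} and ψ_μ a linear character of H with ψ_μ^G = χ_μ. Then ℚ(ψ_μ) = ℚ(χ_μ) if and only if |ker(ψ_μ)/ker(μ)| = |G/Z(G)|^{1/2}, and [ℚ(ψ_μ) : ℚ(χ_μ)] = 2 if and only if |ker(ψ_μ)/ker(μ)| = (1/2)|G/Z(G)|^{1/2}. -/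
lemma aux_totient_scale : ∀ n k : ℕ, 0 < k → k ∣ n → (∀ p, p.Prime → p ∣ n → p ∣ k) →
    n.totient * k = k.totient * n := by
  intro n
  induction n using Nat.strong_induction_on with
  | _ n IH =>
    intro k hk hdvd hsupp
    rcases eq_or_ne n k with rfl | hne
    · ring
    obtain ⟨t, rfl⟩ := hdvd
    have ht1 : t ≠ 1 := by rintro rfl; simp at hne
    have ht0 : t ≠ 0 := by
      rintro rfl
      obtain ⟨p, hpk, hp⟩ := Nat.exists_infinite_primes (k + 1)
      have := hsupp p hp (by simp)
      have := Nat.le_of_dvd hk this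
      omega
    obtain ⟨p, hp, hpt⟩ := Nat.exists_prime_and_dvd ht1
    have hpk : p ∣ k := hsupp p hp (Dvd.dvd.mul_left hpt k)
    obtain ⟨s, rfl⟩ := hpt
    have hs0 : s ≠ 0 := by rintro rfl; simp at ht0
    -- k * (p * s) = p * (k * s)
    have hrw : k * (p * s) = p * (k * s) := by ring
    have hdvd2 : p ∣ k * s := Dvd.dvd.mul_right hpk s
    have htot : (k * (p * s)).totient = p * (k * s).totient := by
      rw [hrw, Nat.totient_mul_of_prime_of_dvd hp hdvd2]
    have hlt : k * s < k * (p * s) := by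
      have h2 := hp.two_le
      have hs : 0 < s := Nat.pos_of_ne_zero hs0
      have : s < p * s := by nlinarith
      exact (Nat.mul_lt_mul_left hk).mpr this
    have hsupp' : ∀ q, q.Prime → q ∣ k * s → q ∣ k := fun q hq hqd =>
      hsupp q hq (by obtain ⟨c, hc⟩ := hqd; exact ⟨c * p, by rw [hrw]; nlinarith [hc]⟩)
    have := IH (k * s) hlt k hk ⟨s, rfl⟩ hsupp'
    rw [htot]
    nlinarith [this]


lemma aux_closure_eq_adjoin (ζ : ℂ) :
    Subfield.closure {ζ} = (IntermediateField.adjoin ℚ {ζ}).toSubfield := by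
  apply le_antisymm
  · have h1 : ({ζ} : Set ℂ) ⊆ (IntermediateField.adjoin ℚ {ζ}).toSubfield := by
      intro x hx
      rcases hx with rfl
      exact (IntermediateField.mem_toSubfield _ _).mpr
        (IntermediateField.mem_adjoin_simple_self ℚ x)
    exact Subfield.closure_le.mpr h1
  · intro x hx
    have hq : ∀ q : ℚ, algebraMap ℚ ℂ q ∈ Subfield.closure ({ζ} : Set ℂ) := fun q => by
      simpa [eq_ratCast] using SubfieldClass.ratCast_mem (Subfield.closure ({ζ} : Set ℂ)) q
    have hle : IntermediateField.adjoin ℚ {ζ} ≤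
        (Subfield.closure ({ζ} : Set ℂ)).toIntermediateField hq :=
      IntermediateField.adjoin_le_iff.mpr (by
        intro y hy; rcases hy with rfl
        exact Subfield.subset_closure rfl)
    exact hle ((IntermediateField.mem_toSubfield _ _).mp hx)

lemma aux_finrank_toSubfield (E : IntermediateField ℚ ℂ) :
    Module.finrank ℚ E.toSubfield = Module.finrank ℚ E := by
  refine LinearEquiv.finrank_eq ?_
  refine
    { toFun := fun x => ⟨x.1, (IntermediateField.mem_toSubfield _ _).mp x.2⟩
      invFun := fun x => ⟨x.1, (IntermediateField.mem_toSubfield _ _).mpr x.2⟩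
      left_inv := fun _ => rfl
      right_inv := fun _ => rfl
      map_add' := fun _ _ => rfl
      map_smul' := fun q x => ?_ }
  apply Subtype.ext
  show (↑(q • x) : ℂ) = ↑(q • (⟨x.1, _⟩ : E))
  rw [Rat.smul_def]
  push_cast
  exact (Rat.smul_def q (x : ℂ)).symm

lemma aux_isIntegral {ζ : ℂ} {n : ℕ} (hn : 0 < n) (hζ : IsPrimitiveRoot ζ n) :
    IsIntegral ℚ ζ := by
  refine ⟨Polynomial.X ^ n - Polynomial.C 1, Polynomial.monic_X_pow_sub_C 1 hn.ne', ?_⟩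
  simp [Polynomial.eval₂_sub, hζ.pow_eq_one]

lemma aux_finrank_closure {ζ : ℂ} {n : ℕ} (hn : 0 < n) (hζ : IsPrimitiveRoot ζ n) :
    Module.finrank ℚ (Subfield.closure {ζ} : Subfield ℂ) = n.totient := by
  have hint := aux_isIntegral hn hζ
  rw [aux_closure_eq_adjoin, aux_finrank_toSubfield]
  rw [← IntermediateField.finrank_eq_finrank_subalgebra]
  have hts : (IntermediateField.adjoin ℚ ({ζ} : Set ℂ)).toSubalgebra
      = Algebra.adjoin ℚ ({ζ} : Set ℂ) :=
    IntermediateField.adjoin_simple_toSubalgebra_of_isAlgebraic hint.isAlgebraic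
  rw [hts]
  have hζ' : IsPrimitiveRoot ζ ((⟨n, hn⟩ : ℕ+) : ℕ) := hζ
  haveI : NeZero ((⟨n, hn⟩ : ℕ+) : ℕ) := ⟨hn.ne'⟩
  haveI := hζ'.adjoin_isCyclotomicExtension ℚ
  exact IsCyclotomicExtension.finrank (n := (⟨n, hn⟩ : ℕ+))
    (Algebra.adjoin ℚ ({ζ} : Set ℂ)) (Polynomial.cyclotomic.irreducible_rat hn)

lemma aux_closure_le {ζ ξ : ℂ} (h : ξ ∈ Subfield.closure ({ζ} : Set ℂ)) :
    Subfield.closure ({ξ} : Set ℂ) ≤ Subfield.closure ({ζ} : Set ℂ) :=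
  Subfield.closure_le.mpr (Set.singleton_subset_iff.mpr h)

lemma aux_closure_eq_closure {ζ ξ : ℂ} {n k : ℕ} (hn : 0 < n) (hk : 0 < k)
    (hζ : IsPrimitiveRoot ζ n) (hξ : IsPrimitiveRoot ξ k)
    (hmem : ξ ∈ Subfield.closure ({ζ} : Set ℂ)) (htot : n.totient = k.totient) :
    Subfield.closure ({ξ} : Set ℂ) = Subfield.closure ({ζ} : Set ℂ) := by
  rw [aux_closure_eq_adjoin, aux_closure_eq_adjoin]
  congr 1
  have hle : IntermediateField.adjoin ℚ ({ξ} : Set ℂ) ≤ IntermediateField.adjoin ℚ ({ζ} : Set ℂ) := by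
    rw [IntermediateField.adjoin_simple_le_iff]
    have := aux_closure_eq_adjoin ζ ▸ hmem
    exact (IntermediateField.mem_toSubfield _ _).mp this
  haveI : FiniteDimensional ℚ (IntermediateField.adjoin ℚ ({ζ} : Set ℂ)) :=
    IntermediateField.adjoin.finiteDimensional (aux_isIntegral hn hζ)
  refine IntermediateField.eq_of_le_of_finrank_eq hle ?_
  have h1 : Module.finrank ℚ (IntermediateField.adjoin ℚ ({ξ} : Set ℂ)) = k.totient := by
    rw [← aux_finrank_toSubfield, ← aux_closure_eq_adjoin]; exact aux_finrank_closure hk hξ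
  have h2 : Module.finrank ℚ (IntermediateField.adjoin ℚ ({ζ} : Set ℂ)) = n.totient := by
    rw [← aux_finrank_toSubfield, ← aux_closure_eq_adjoin]; exact aux_finrank_closure hn hζ
  rw [h1, h2, htot]

set_option maxHeartbeats 1000000

/-- Let `G` be a VZ-group, `μ ∈ Irr(Z(G))` with `G' ⊄ ker μ`, `χ_μ` the corresponding
non-linear irreducible character, `H ≤ G` of index `m = |G/Z(G)|^{1/2}` and `ψ_μ` a linear
character of `H` with `ψ_μ^G = χ_μ`.  Then `ℚ(ψ_μ) = ℚ(χ_μ)` iff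
`|ker ψ_μ| = m·|ker μ|` (i.e. `|ker ψ_μ / ker μ| = m`), and `[ℚ(ψ_μ) : ℚ(χ_μ)] = 2` iff
`|ker ψ_μ| = (m/2)·|ker μ|`. -/
theorem stmt12 {G : Type} [Group G] [Fintype G] (hVZ : IsVZ G)
    (hG' : commutator G ≤ Subgroup.center G)
    (μ : ↥(Subgroup.center G) →* ℂ)
    (hμ : ∃ g : ↥(Subgroup.center G), (g : G) ∈ commutator G ∧ μ g ≠ 1)
    {m : ℕ} (hm : m ^ 2 = (Subgroup.center G).index)
    (χμ : G → ℂ)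
    (hχ1 : ∀ (g : G) (hg : g ∈ Subgroup.center G), χμ g = (m : ℂ) * μ ⟨g, hg⟩)
    (hχ2 : ∀ g : G, g ∉ Subgroup.center G → χμ g = 0)
    (H : Subgroup G) (hH : H.index = m) (ψ : ↥H →* ℂ)
    (hind : inducedChar H ⇑ψ = χμ) :
    (QChar ⇑ψ = QChar χμ ↔
        Nat.card {h : ↥H // ψ h = 1} =
          m * Nat.card {z : ↥(Subgroup.center G) // μ z = 1}) ∧
    ((QChar χμ ≤ QChar ⇑ψ ∧
        Module.finrank ℚ ↥(QChar ⇑ψ) = 2 * Module.finrank ℚ ↥(QChar χμ)) ↔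
      2 * Nat.card {h : ↥H // ψ h = 1} =
        m * Nat.card {z : ↥(Subgroup.center G) // μ z = 1}) := by
  classical
  -- nonvanishing of characters values
  have hμne : ∀ z, μ z ≠ 0 := fun z => by
    have h := (μ.toHomUnits z).ne_zero
    rwa [MonoidHom.coe_toHomUnits] at h
  have hψne : ∀ h, ψ h ≠ 0 := fun h => by
    have h2 := (ψ.toHomUnits h).ne_zero
    rwa [MonoidHom.coe_toHomUnits] at h2
  have hidx : (Subgroup.center G).index ≠ 0 := Subgroup.index_ne_zero_of_finite
  have hm0 : m ≠ 0 := by rintro rfl; rw [← hm] at hidx; simp at hidx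
  have hmC : (m : ℂ) ≠ 0 := Nat.cast_ne_zero.mpr hm0
  have hcardG : Nat.card G = Nat.card ↥H * m := by rw [← hH, Subgroup.card_mul_index]
  have hcardGfin : (Fintype.card G : ℕ) = Nat.card G := (Nat.card_eq_fintype_card).symm
  have hcardG0 : (Nat.card G : ℂ) ≠ 0 := Nat.cast_ne_zero.mpr Nat.card_pos.ne'
  have hcardH0 : (Nat.card ↥H : ℂ) ≠ 0 := Nat.cast_ne_zero.mpr Nat.card_pos.ne'
  -- ψ restricted to the center is μ, and Z ≤ H
  have key : ∀ (z : G) (hz : z ∈ Subgroup.center G), ∃ hzH : z ∈ H, ψ ⟨z, hzH⟩ = μ ⟨z, hz⟩ := by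
    intro z hz
    have h0 : inducedChar H ⇑ψ z = (m : ℂ) * μ ⟨z, hz⟩ := by rw [hind]; exact hχ1 z hz
    have hcj : ∀ x : G, x * z * x⁻¹ = z := fun x => by
      rw [Subgroup.mem_center_iff.mp hz x, mul_inv_cancel_right]
    unfold inducedChar at h0
    by_cases hzH : z ∈ H
    · have hterm : ∀ x : G,
          (if h : x * z * x⁻¹ ∈ H then ψ ⟨x * z * x⁻¹, h⟩ else 0) = ψ ⟨z, hzH⟩ := fun x => by
        rw [dif_pos (show x * z * x⁻¹ ∈ H by rw [hcj x]; exact hzH)]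
        congr 1
        exact Subtype.ext (hcj x)
      simp only [hterm] at h0
      rw [Finset.sum_const, Finset.card_univ, nsmul_eq_mul] at h0
      refine ⟨hzH, ?_⟩
      rw [hcardGfin, hcardG] at h0
      push_cast at h0
      rw [← mul_assoc, inv_mul_eq_div, mul_comm (Nat.card ↥H : ℂ) (m : ℂ),
        mul_div_assoc, div_self hcardH0, mul_one] at h0
      exact mul_left_cancel₀ hmC h0
    · have hterm : ∀ x : G,
          (if h : x * z * x⁻¹ ∈ H then ψ ⟨x * z * x⁻¹, h⟩ else 0) = 0 := fun x => by
        rw [dif_neg (show ¬ (x * z * x⁻¹ ∈ H) by rw [hcj x]; exact hzH)]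
      simp only [hterm] at h0
      rw [Finset.sum_const, Finset.card_univ, nsmul_eq_mul, mul_zero, mul_zero] at h0
      exact absurd h0.symm (mul_ne_zero hmC (hμne _))
  have hZH : ∀ {z : G}, z ∈ Subgroup.center G → z ∈ H := fun hz => (key _ hz).1
  -- unit-valued characters
  set ψ' := ψ.toHomUnits with hψ'def
  set μ' := μ.toHomUnits with hμ'def
  haveI : Finite ↥ψ'.range := Finite.of_surjective _ ψ'.rangeRestrict_surjective
  haveI : Finite ↥μ'.range := Finite.of_surjective _ μ'.rangeRestrict_surjective
  obtain ⟨gζ, hgζ⟩ := IsCyclic.exists_generator (α := ↥ψ'.range)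
  obtain ⟨gξ, hgξ⟩ := IsCyclic.exists_generator (α := ↥μ'.range)
  set n := Nat.card ↥ψ'.range with hndef
  set k := Nat.card ↥μ'.range with hkdef
  have hn0 : 0 < n := Nat.card_pos
  have hk0 : 0 < k := Nat.card_pos
  set ζ : ℂ := ((gζ : ℂˣ) : ℂ) with hζdef
  set ξ : ℂ := ((gξ : ℂˣ) : ℂ) with hξdef
  have hordsub : ∀ (u : ↥ψ'.range), orderOf ((u : ℂˣ) : ℂ) = orderOf u := fun u => by
    rw [show ((u : ℂˣ) : ℂ) = (Units.coeHom ℂ) (ψ'.range.subtype u) from rfl,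
      orderOf_injective (Units.coeHom ℂ) (fun _ _ h => Units.ext h),
      orderOf_injective ψ'.range.subtype Subtype.coe_injective]
  have hordsubμ : ∀ (u : ↥μ'.range), orderOf ((u : ℂˣ) : ℂ) = orderOf u := fun u => by
    rw [show ((u : ℂˣ) : ℂ) = (Units.coeHom ℂ) (μ'.range.subtype u) from rfl,
      orderOf_injective (Units.coeHom ℂ) (fun _ _ h => Units.ext h),
      orderOf_injective μ'.range.subtype Subtype.coe_injective]
  have hζord : orderOf ζ = n := by
    rw [hζdef, hordsub gζ, orderOf_eq_card_of_forall_mem_zpowers hgζ]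
  have hξord : orderOf ξ = k := by
    rw [hξdef, hordsubμ gξ, orderOf_eq_card_of_forall_mem_zpowers hgξ]
  have hζ : IsPrimitiveRoot ζ n := hζord ▸ IsPrimitiveRoot.orderOf ζ
  have hξ : IsPrimitiveRoot ξ k := hξord ▸ IsPrimitiveRoot.orderOf ξ
  -- μ' range ≤ ψ' range
  have hμψrange : μ'.range ≤ ψ'.range := by
    rintro w ⟨z, rfl⟩
    obtain ⟨hzH, hval⟩ := key z.1 z.2
    refine ⟨⟨z.1, hzH⟩, ?_⟩
    ext
    rw [MonoidHom.coe_toHomUnits, MonoidHom.coe_toHomUnits, hval]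
  have hkn : k ∣ n := by
    rw [hndef, hkdef]; exact Subgroup.card_dvd_of_le hμψrange
  -- values lie in cyclotomic subfields
  have hvalζ : ∀ h : ↥H, ψ h ∈ Subfield.closure ({ζ} : Set ℂ) := by
    intro h
    obtain ⟨j, hj⟩ := Subgroup.mem_zpowers_iff.mp (hgζ ⟨ψ' h, ⟨h, rfl⟩⟩)
    have hval : ζ ^ j = ψ h := by
      have h2 := congrArg (fun u : ↥ψ'.range => ((u : ℂˣ) : ℂ)) hj
      simp only [SubgroupClass.coe_zpow, Units.val_zpow_eq_zpow_val] at h2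
      rw [h2]; exact (MonoidHom.coe_toHomUnits ψ h)
    rw [← hval]
    exact Subfield.zpow_mem _ (Subfield.subset_closure (Set.mem_singleton _)) j
  have hvalξ : ∀ z, μ z ∈ Subfield.closure ({ξ} : Set ℂ) := by
    intro z
    obtain ⟨j, hj⟩ := Subgroup.mem_zpowers_iff.mp (hgξ ⟨μ' z, ⟨z, rfl⟩⟩)
    have hval : ξ ^ j = μ z := by
      have h2 := congrArg (fun u : ↥μ'.range => ((u : ℂˣ) : ℂ)) hj
      simp only [SubgroupClass.coe_zpow, Units.val_zpow_eq_zpow_val] at h2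
      rw [h2]; exact (MonoidHom.coe_toHomUnits μ z)
    rw [← hval]
    exact Subfield.zpow_mem _ (Subfield.subset_closure (Set.mem_singleton _)) j
  have hζval : ∃ h : ↥H, ψ h = ζ := by
    obtain ⟨h, hh⟩ := gζ.2
    exact ⟨h, by rw [← MonoidHom.coe_toHomUnits ψ h, hh]⟩
  have hξval : ∃ z, μ z = ξ := by
    obtain ⟨z, hz⟩ := gξ.2
    exact ⟨z, by rw [← MonoidHom.coe_toHomUnits μ z, hz]⟩
  have hξζ : ξ ∈ Subfield.closure ({ζ} : Set ℂ) := by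
    obtain ⟨z, hz⟩ := hξval
    obtain ⟨hzH, hval⟩ := key z.1 z.2
    rw [← hz, show μ z = μ ⟨z.1, z.2⟩ from rfl, ← hval]
    exact hvalζ _
  -- identification of the character fields
  have hQψ : QChar ⇑ψ = Subfield.closure ({ζ} : Set ℂ) := by
    apply le_antisymm
    · rw [QChar]
      apply Subfield.closure_le.mpr
      rintro w ⟨h, rfl⟩
      exact hvalζ h
    · apply Subfield.closure_le.mpr
      intro w hw
      rcases hw with rfl
      obtain ⟨h, hh⟩ := hζval
      rw [← hh]
      exact Subfield.subset_closure ⟨h, rfl⟩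
  have hQχ : QChar χμ = Subfield.closure ({ξ} : Set ℂ) := by
    apply le_antisymm
    · rw [QChar]
      apply Subfield.closure_le.mpr
      rintro w ⟨g, rfl⟩
      by_cases hg : g ∈ Subgroup.center G
      · rw [hχ1 g hg]
        exact Subfield.mul_mem _ (natCast_mem _ m) (hvalξ _)
      · rw [hχ2 g hg]
        exact Subfield.zero_mem _
    · apply Subfield.closure_le.mpr
      intro w hw
      rcases hw with rfl
      obtain ⟨z, hz⟩ := hξval
      have h1 : χμ z.1 ∈ QChar χμ := Subfield.subset_closure ⟨z.1, rfl⟩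
      rw [hχ1 z.1 z.2] at h1
      have h2 : (m : ℂ)⁻¹ ∈ QChar χμ :=
        Subfield.inv_mem _ (natCast_mem _ m)
      have h3 := Subfield.mul_mem _ h2 h1
      rw [← mul_assoc, inv_mul_cancel₀ hmC, one_mul] at h3
      rwa [show μ ⟨z.1, z.2⟩ = μ z from rfl, hz] at h3
  -- cardinality bookkeeping
  have hKH : Nat.card {h : ↥H // ψ h = 1} = Nat.card ↥ψ'.ker := by
    apply Nat.card_congr
    apply Equiv.subtypeEquivRight
    intro h
    rw [MonoidHom.mem_ker, Units.ext_iff, Units.val_one, MonoidHom.coe_toHomUnits]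
  have hKZ : Nat.card {z : ↥(Subgroup.center G) // μ z = 1} = Nat.card ↥μ'.ker := by
    apply Nat.card_congr
    apply Equiv.subtypeEquivRight
    intro z
    rw [MonoidHom.mem_ker, Units.ext_iff, Units.val_one, MonoidHom.coe_toHomUnits]
  have hHfact : Nat.card ↥H = n * Nat.card ↥ψ'.ker := by
    rw [Subgroup.card_eq_card_quotient_mul_card_subgroup ψ'.ker]
    congr 1
    exact Nat.card_congr (QuotientGroup.quotientKerEquivRange ψ').toEquiv
  have hZfact : Nat.card ↥(Subgroup.center G) = k * Nat.card ↥μ'.ker := by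
    rw [Subgroup.card_eq_card_quotient_mul_card_subgroup μ'.ker]
    congr 1
    exact Nat.card_congr (QuotientGroup.quotientKerEquivRange μ').toEquiv
  have hcardGZ : Nat.card G = Nat.card ↥(Subgroup.center G) * m ^ 2 := by
    rw [hm, Subgroup.card_mul_index]
  have hHZ : Nat.card ↥H = Nat.card ↥(Subgroup.center G) * m := by
    have h1 : Nat.card ↥H * m = (Nat.card ↥(Subgroup.center G) * m) * m := by
      rw [← hcardG, hcardGZ]; ring
    exact Nat.eq_of_mul_eq_mul_right (Nat.pos_of_ne_zero hm0) h1
  have hKHpos : 0 < Nat.card ↥ψ'.ker := Nat.card_pos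
  have hKZpos : 0 < Nat.card ↥μ'.ker := Nat.card_pos
  -- master identity : n * |ker ψ| = k * |ker μ| * m
  have hmaster : n * Nat.card ↥ψ'.ker = k * Nat.card ↥μ'.ker * m := by
    rw [← hHfact, ← hZfact, hHZ]
  -- support of n is contained in support of k
  have hsupp : ∀ p, p.Prime → p ∣ n → p ∣ k := by
    intro p hp hpn
    haveI := Fact.mk hp
    have hdvdk : ∀ z : ↥(Subgroup.center G), p ∣ orderOf (μ' z) → p ∣ k := by
      intro z hpz
      have h1 : orderOf (μ'.range.subtype ⟨μ' z, ⟨z, rfl⟩⟩) =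
          orderOf (⟨μ' z, ⟨z, rfl⟩⟩ : ↥μ'.range) :=
        orderOf_injective μ'.range.subtype Subtype.coe_injective _
      have h2 : orderOf (⟨μ' z, ⟨z, rfl⟩⟩ : ↥μ'.range) ∣ k := orderOf_dvd_natCard _
      have h3 : μ'.range.subtype ⟨μ' z, ⟨z, rfl⟩⟩ = μ' z := rfl
      rw [h3] at h1
      exact dvd_trans (h1 ▸ hpz) h2
    obtain ⟨u, hu⟩ := exists_prime_orderOf_dvd_card' (G := ↥ψ'.range) p hpn
    obtain ⟨h₀, hh₀⟩ := u.2
    have hordh₀ : orderOf (ψ' h₀) = p := by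
      have h1 : orderOf (ψ'.range.subtype u) = orderOf u :=
        orderOf_injective ψ'.range.subtype Subtype.coe_injective _
      have h2 : ψ'.range.subtype u = (u : ℂˣ) := rfl
      rw [hh₀, ← h2, h1, hu]
    set c := orderOf h₀ with hcdef
    have hc0 : c ≠ 0 := (orderOf_pos h₀).ne'
    set a := c.factorization p with hadef
    set b := c / p ^ a with hbdef
    have hbc : b ∣ c := Nat.ordCompl_dvd c p
    have hpb : ¬ p ∣ b := Nat.not_dvd_ordCompl hp hc0
    have hb0 : b ≠ 0 := (Nat.ordCompl_pos p hc0).ne'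
    set h₁ := h₀ ^ b with h₁def
    have hψh₁ : orderOf (ψ' h₁) = p := by
      rw [h₁def, map_pow, orderOf_pow' _ hb0, hordh₀,
        Nat.Coprime.gcd_eq_one ((Nat.Prime.coprime_iff_not_dvd hp).mpr hpb), Nat.div_one]
    have hψ'h₁ne : ψ' h₁ ≠ 1 := by
      intro hone
      rw [hone, orderOf_one] at hψh₁
      exact hp.one_lt.ne' hψh₁.symm
    have hpe : h₁ ^ (p ^ a) = 1 := by
      rw [h₁def, ← pow_mul]
      have hba : b * p ^ a = c := by
        rw [mul_comm]; exact Nat.ordProj_mul_ordCompl_eq_self c p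
      rw [hba, hcdef]; exact pow_orderOf_eq_one h₀
    set g₁ := (h₁ : G) with hg₁def
    have hg₁pow : g₁ ^ (p ^ a) = 1 := by
      rw [hg₁def, ← SubgroupClass.coe_pow, hpe, OneMemClass.coe_one]
    by_cases hg₁ : g₁ ∈ Subgroup.center G
    · obtain ⟨hzH, hval⟩ := key g₁ hg₁
      have heq : μ' ⟨g₁, hg₁⟩ = ψ' h₁ := by
        ext
        rw [MonoidHom.coe_toHomUnits, MonoidHom.coe_toHomUnits, ← hval]
      apply hdvdk ⟨g₁, hg₁⟩
      rw [heq, hψh₁]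
    · -- non-central case : use vanishing of the induced character
      have h0 : inducedChar H ⇑ψ g₁ = 0 := by rw [hind]; exact hχ2 g₁ hg₁
      have hcomm : ∀ x : G, x * g₁ * x⁻¹ * g₁⁻¹ ∈ Subgroup.center G := fun x => by
        apply hG'
        rw [commutator_def]
        have := Subgroup.commutator_mem_commutator (Subgroup.mem_top x) (Subgroup.mem_top g₁)
        rwa [commutatorElement_def] at this
      have hmemH : ∀ x : G, x * g₁ * x⁻¹ ∈ H := fun x => by
        have h1 : x * g₁ * x⁻¹ = (x * g₁ * x⁻¹ * g₁⁻¹) * g₁ := by group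
        rw [h1]
        exact H.mul_mem (hZH (hcomm x)) h₁.2
      have hterm : ∀ x : G,
          (if h : x * g₁ * x⁻¹ ∈ H then ψ ⟨x * g₁ * x⁻¹, h⟩ else 0) =
            μ ⟨x * g₁ * x⁻¹ * g₁⁻¹, hcomm x⟩ * ψ h₁ := fun x => by
        rw [dif_pos (hmemH x)]
        have hsplit : (⟨x * g₁ * x⁻¹, hmemH x⟩ : ↥H) =
            ⟨x * g₁ * x⁻¹ * g₁⁻¹, hZH (hcomm x)⟩ * h₁ := by
          apply Subtype.ext
          show x * g₁ * x⁻¹ = (x * g₁ * x⁻¹ * g₁⁻¹) * g₁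
          group
        rw [hsplit, map_mul]
        congr 1
        obtain ⟨hzH, hval⟩ := key _ (hcomm x)
        exact hval
      unfold inducedChar at h0
      simp only [hterm] at h0
      rw [← Finset.sum_mul] at h0
      have hsum : ∑ x : G, (μ ⟨x * g₁ * x⁻¹ * g₁⁻¹, hcomm x⟩ : ℂ) = 0 := by
        rcases mul_eq_zero.mp h0 with h | h
        · exact absurd h (inv_ne_zero hcardH0)
        · rcases mul_eq_zero.mp h with h' | h'
          · exact h'
          · exact absurd h' (hψne h₁)
      have hex : ∃ x : G, μ ⟨x * g₁ * x⁻¹ * g₁⁻¹, hcomm x⟩ ≠ 1 := by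
        by_contra hall
        push_neg at hall
        rw [Finset.sum_congr rfl (fun x _ => hall x), Finset.sum_const,
          Finset.card_univ, nsmul_eq_mul, mul_one] at hsum
        rw [hcardGfin] at hsum
        exact hcardG0 hsum
      obtain ⟨x, hx⟩ := hex
      set z : G := x * g₁ * x⁻¹ * g₁⁻¹ with hzdef
      have hzZ : z ∈ Subgroup.center G := hcomm x
      have hconjpow : (x * g₁ * x⁻¹) ^ (p ^ a) = 1 := by
        have h1 : (x * g₁ * x⁻¹) ^ (p ^ a) = x * g₁ ^ (p ^ a) * x⁻¹ := by
          rw [show x * g₁ * x⁻¹ = (MulAut.conj x) g₁ from rfl, ← map_pow]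
          rfl
        rw [h1, hg₁pow, mul_one, mul_inv_cancel]
      have hcommute : Commute z g₁ := ((Subgroup.mem_center_iff.mp hzZ) g₁).symm
      have hzg : z * g₁ = x * g₁ * x⁻¹ := by rw [hzdef]; group
      have hzpow : z ^ (p ^ a) = 1 := by
        have h1 : (z * g₁) ^ (p ^ a) = z ^ (p ^ a) * g₁ ^ (p ^ a) := hcommute.mul_pow _
        rw [hzg, hconjpow] at h1
        rw [hg₁pow, mul_one] at h1
        exact h1.symm
      have hμzpow : (μ' ⟨z, hzZ⟩) ^ (p ^ a) = 1 := by
        rw [← map_pow]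
        have : (⟨z, hzZ⟩ : ↥(Subgroup.center G)) ^ (p ^ a) = 1 := by
          apply Subtype.ext
          rw [SubgroupClass.coe_pow]
          exact hzpow
        rw [this, map_one]
      have hordz : orderOf (μ' ⟨z, hzZ⟩) ∣ p ^ a := orderOf_dvd_of_pow_eq_one hμzpow
      obtain ⟨i, hia, hie⟩ := (Nat.dvd_prime_pow hp).mp hordz
      have hi0 : i ≠ 0 := by
        rintro rfl
        rw [pow_zero, orderOf_eq_one_iff] at hie
        apply hx
        have h5 : ((μ' ⟨z, hzZ⟩ : ℂˣ) : ℂ) = 1 := by rw [hie]; rfl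
        calc μ ⟨z, hcomm x⟩ = ((μ' ⟨z, hzZ⟩ : ℂˣ) : ℂ) :=
              (MonoidHom.coe_toHomUnits μ ⟨z, hzZ⟩).symm
          _ = 1 := h5
      apply hdvdk ⟨z, hzZ⟩
      rw [hie]
      exact dvd_pow_self p hi0
  -- the totient scaling identity
  have hscale : n.totient * k = k.totient * n := aux_totient_scale n k hk0 hkn hsupp
  have htk : 0 < k.totient := Nat.totient_pos.mpr hk0
  -- finrank identifications
  have hfrψ : Module.finrank ℚ ↥(QChar ⇑ψ) = n.totient := by
    rw [hQψ]; exact aux_finrank_closure hn0 hζ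
  have hfrχ : Module.finrank ℚ ↥(QChar χμ) = k.totient := by
    rw [hQχ]; exact aux_finrank_closure hk0 hξ
  have hle : QChar χμ ≤ QChar ⇑ψ := by
    rw [hQψ, hQχ]; exact aux_closure_le hξζ
  -- counting equivalences
  have hcount1 : (Nat.card {h : ↥H // ψ h = 1} =
      m * Nat.card {z : ↥(Subgroup.center G) // μ z = 1}) ↔ n = k := by
    rw [hKH, hKZ]
    constructor
    · intro hEq
      rw [hEq] at hmaster
      have h1 : n * (m * Nat.card ↥μ'.ker) = k * (m * Nat.card ↥μ'.ker) := by
        rw [hmaster]; ring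
      exact Nat.eq_of_mul_eq_mul_right
        (Nat.mul_pos (Nat.pos_of_ne_zero hm0) hKZpos) h1
    · intro hnk
      rw [hnk] at hmaster
      have h1 : Nat.card ↥ψ'.ker * k = (m * Nat.card ↥μ'.ker) * k := by
        rw [mul_comm (Nat.card ↥ψ'.ker) k, hmaster]; ring
      exact Nat.eq_of_mul_eq_mul_right hk0 h1
  have hcount2 : (2 * Nat.card {h : ↥H // ψ h = 1} =
      m * Nat.card {z : ↥(Subgroup.center G) // μ z = 1}) ↔ n = 2 * k := by
    rw [hKH, hKZ]
    constructor
    · intro hEq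
      have h1 : n * Nat.card ↥ψ'.ker = (2 * k) * Nat.card ↥ψ'.ker := by
        calc n * Nat.card ↥ψ'.ker = k * Nat.card ↥μ'.ker * m := hmaster
          _ = k * (m * Nat.card ↥μ'.ker) := by ring
          _ = k * (2 * Nat.card ↥ψ'.ker) := by rw [← hEq]
          _ = (2 * k) * Nat.card ↥ψ'.ker := by ring
      exact Nat.eq_of_mul_eq_mul_right hKHpos h1
    · intro hnk
      have h1 : (2 * Nat.card ↥ψ'.ker) * k = (m * Nat.card ↥μ'.ker) * k := by
        calc (2 * Nat.card ↥ψ'.ker) * k = (2 * k) * Nat.card ↥ψ'.ker := by ring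
          _ = n * Nat.card ↥ψ'.ker := by rw [hnk]
          _ = k * Nat.card ↥μ'.ker * m := hmaster
          _ = (m * Nat.card ↥μ'.ker) * k := by ring
      exact Nat.eq_of_mul_eq_mul_right hk0 h1
  constructor
  · rw [hcount1]
    constructor
    · intro hEq
      have htot : n.totient = k.totient := by rw [← hfrψ, ← hfrχ, hEq]
      rw [htot] at hscale
      exact (Nat.eq_of_mul_eq_mul_left htk hscale).symm
    · intro hnk
      rw [hQψ, hQχ]
      exact (aux_closure_eq_closure hn0 hk0 hζ hξ hξζ (by rw [hnk])).symm
  · rw [hcount2]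
    constructor
    · rintro ⟨-, hfr⟩
      have htot : n.totient = 2 * k.totient := by rw [← hfrψ, ← hfrχ, hfr]
      rw [htot] at hscale
      have h1 : k.totient * (2 * k) = k.totient * n := by rw [← hscale]; ring
      exact (Nat.eq_of_mul_eq_mul_left htk h1).symm
    · intro hnk
      refine ⟨hle, ?_⟩
      rw [hfrψ, hfrχ, hnk]
      rw [hnk] at hscale
      have h1 : (2 * k).totient * k = (2 * k.totient) * k := by
        rw [hscale]; ring
      exact Nat.eq_of_mul_eq_mul_right hk0 h1
end
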